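/- arXiv:1905.01903 — 3 statements merged into one kernel-verified Lean document; each statement's English description precedes it below -/
import Mathlib

section
/- A connected graph G made of quartic bubbles and dashed lines in which all dashed lines are edge-cuts is precisely a tree when one contracts each quartic bubble to a single node and views dashed lines as edges; equivalently, the statements (a) G ∈ 𝔾_V, (b) every dashed line of G splits G into G₁ ∈ 𝔾_{V₁} and G₂ ∈ 𝔾_{V₂} with V₁ + V₂ - 2 = V, and (c) G is obtained from some G' ∈ 𝔾_{V-2} by attaching a new quartic bubble Q_C via a single dashed line, are equivalent (for V ≥ 6 in case (c)). -/
attribute [local instance] Classical.propDecidable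

/-- Membership in `𝔾_V`: a connected gluing of quartic bubbles (vertices of the graph,
each incident to at most 4 dashed lines) along dashed lines (edges of the graph), all of
which are edge-cuts, with `V` tensor-vertices carrying no dashed line, i.e.
`V + 2·(#dashed lines) = 4·(#bubbles)`. -/
def InGV {α : Type*} [Fintype α] (G : SimpleGraph α) (V : ℕ) : Prop :=
  G.Connected ∧ (∀ e ∈ G.edgeSet, G.IsBridge e) ∧ (∀ v, G.degree v ≤ 4) ∧
    V + 2 * G.edgeFinset.card = 4 * Fintype.card α

namespace GVAux

open SimpleGraph

variable {α : Type*}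

/-- Lift a walk whose support lies in `s` to the induced subgraph. -/
lemma walk_lift {G : SimpleGraph α} {s : Set α} :
    ∀ {x y : α} (p : G.Walk x y), (∀ z ∈ p.support, z ∈ s) → ∀ (hx : x ∈ s) (hy : y ∈ s),
    ∃ q : (G.induce s).Walk ⟨x, hx⟩ ⟨y, hy⟩,
      q.map (SimpleGraph.Embedding.induce s).toHom = p := by
  intro x y p
  induction p with
  | nil => intro _ hx hy; exact ⟨.nil, rfl⟩
  | @cons x m y h p ih =>
    intro hs hx hy
    have hm : m ∈ s := hs m (by simp)
    obtain ⟨q, hq⟩ := ih (fun z hz => hs z (by simp [hz])) hm hy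
    refine ⟨.cons (by exact h) q, ?_⟩
    subst hq; rfl

lemma reachable_induce_of_walk {G H : SimpleGraph α} (hle : H ≤ G) {s : Set α} :
    ∀ {x y : α} (p : H.Walk x y), (∀ z ∈ p.support, z ∈ s) → ∀ (hx : x ∈ s) (hy : y ∈ s),
    (G.induce s).Reachable ⟨x, hx⟩ ⟨y, hy⟩ := by
  intro x y p
  induction p with
  | nil => intro _ hx hy; exact .refl _
  | @cons x m y h p ih =>
    intro hs hx hy
    have hm : m ∈ s := hs m (by simp)
    exact ((SimpleGraph.Adj.reachable (by exact hle h :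
      (G.induce s).Adj ⟨x, hx⟩ ⟨m, hm⟩))).trans (ih (fun z hz => hs z (by simp [hz])) hm hy)

lemma acyclic_induce {G : SimpleGraph α} (hac : G.IsAcyclic) (s : Set α) :
    (G.induce s).IsAcyclic := by
  intro v p hp
  exact hac (p.map (SimpleGraph.Embedding.induce s).toHom)
    (hp.map (f := (SimpleGraph.Embedding.induce s).toHom) (by exact Subtype.val_injective))

lemma reach_all {G : SimpleGraph α} {u v : α}
    (huv : (G.deleteEdges {s(u, v)}).Reachable u v) :
    ∀ {x y : α}, G.Walk x y → (G.deleteEdges {s(u, v)}).Reachable x y := by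
  intro x y p
  induction p with
  | nil => exact .refl _
  | @cons x m y h p ih =>
    refine Reachable.trans ?_ ih
    by_cases he : s(x, m) = s(u, v)
    · rw [Sym2.eq_iff] at he
      rcases he with ⟨rfl, rfl⟩ | ⟨rfl, rfl⟩
      · exact huv
      · exact huv.symm
    · exact (SimpleGraph.deleteEdges_adj.mpr ⟨h, by simpa using he⟩).reachable

lemma reach_side {G : SimpleGraph α} {u v : α} :
    ∀ {x y : α}, G.Walk x y →
      ((G.deleteEdges {s(u, v)}).Reachable u x ∨ (G.deleteEdges {s(u, v)}).Reachable v x) →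
      ((G.deleteEdges {s(u, v)}).Reachable u y ∨ (G.deleteEdges {s(u, v)}).Reachable v y) := by
  intro x y p
  induction p with
  | nil => exact id
  | @cons x m y h p ih =>
    intro hx
    refine ih ?_
    by_cases he : s(x, m) = s(u, v)
    · rw [Sym2.eq_iff] at he
      rcases he with ⟨rfl, rfl⟩ | ⟨rfl, rfl⟩
      · exact Or.inr (.refl _)
      · exact Or.inl (.refl _)
    · have hadj : (G.deleteEdges {s(u, v)}).Adj x m :=
        SimpleGraph.deleteEdges_adj.mpr ⟨h, by simpa using he⟩
      rcases hx with hx | hx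
      · exact Or.inl (hx.trans hadj.reachable)
      · exact Or.inr (hx.trans hadj.reachable)

lemma two_le_degree_of_cycle {G : SimpleGraph α} [Fintype α] {v b : α}
    (p : G.Walk v v) (hp : p.IsCycle) (hb : b ∈ p.support) : 2 ≤ G.degree b := by
  classical
  have hq : (p.rotate b hb).IsCycle := hp.rotate hb
  set q := p.rotate b hb with hqdef
  obtain ⟨c, hbc, t, hqt⟩ := SimpleGraph.Walk.not_nil_iff.mp hq.not_nil
  obtain ⟨d, hbd, t', htr⟩ := SimpleGraph.Walk.not_nil_iff.mp
    (SimpleGraph.Walk.not_nil_of_ne (p := t.reverse) hbc.ne)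
  have hcd : c ≠ d := by
    intro hcd
    subst hcd
    have hmem : s(b, c) ∈ t.edges := by
      have h2 : s(b, c) ∈ t.reverse.edges := by rw [htr]; simp
      simpa [SimpleGraph.Walk.edges_reverse] using h2
    have hnodup := hq.edges_nodup
    rw [hqt] at hnodup
    simp only [SimpleGraph.Walk.edges_cons, List.nodup_cons] at hnodup
    exact hnodup.1 hmem
  have hsub : ({c, d} : Finset α) ⊆ G.neighborFinset b := by
    intro z hz
    simp only [Finset.mem_insert, Finset.mem_singleton] at hz
    rcases hz with rfl | rfl
    · exact (SimpleGraph.mem_neighborFinset _ _ _).mpr hbc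
    · exact (SimpleGraph.mem_neighborFinset _ _ _).mpr hbd
  calc 2 = ({c, d} : Finset α).card := (Finset.card_pair hcd).symm
  _ ≤ (G.neighborFinset b).card := Finset.card_le_card hsub
  _ = G.degree b := G.card_neighborFinset_eq_degree b

lemma two_le_degree_of_path_internal {G : SimpleGraph α} [Fintype α] {x y b : α}
    (p : G.Walk x y) (hp : p.IsPath) (hb : b ∈ p.support) (hbx : b ≠ x) (hby : b ≠ y) :
    2 ≤ G.degree b := by
  classical
  set q := p.takeUntil b hb with hqdef
  set r := p.dropUntil b hb with hrdef
  obtain ⟨c, hbc, q', hq'⟩ := SimpleGraph.Walk.not_nil_iff.mp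
    (SimpleGraph.Walk.not_nil_of_ne (p := q.reverse) hbx)
  obtain ⟨d, hbd, r', hr'⟩ := SimpleGraph.Walk.not_nil_iff.mp
    (SimpleGraph.Walk.not_nil_of_ne (p := r) hby)
  have hcq : c ∈ q.support := by
    have h2 : c ∈ q.reverse.support := by rw [hq']; simp
    simpa [SimpleGraph.Walk.support_reverse] using h2
  have hdr : d ∈ r.support.tail := by rw [hr']; simp
  have hnodup : (q.support ++ r.support.tail).Nodup := by
    rw [← SimpleGraph.Walk.support_append, SimpleGraph.Walk.take_spec p hb]
    exact hp.support_nodup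
  have hcd : c ≠ d := fun hcd =>
    (List.nodup_append'.mp hnodup).2.2 hcq (hcd ▸ hdr)
  have hsub : ({c, d} : Finset α) ⊆ G.neighborFinset b := by
    intro z hz
    simp only [Finset.mem_insert, Finset.mem_singleton] at hz
    rcases hz with rfl | rfl
    · exact (SimpleGraph.mem_neighborFinset _ _ _).mpr hbc
    · exact (SimpleGraph.mem_neighborFinset _ _ _).mpr hbd
  calc 2 = ({c, d} : Finset α).card := (Finset.card_pair hcd).symm
  _ ≤ (G.neighborFinset b).card := Finset.card_le_card hsub
  _ = G.degree b := G.card_neighborFinset_eq_degree b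

lemma InGV_induce_of_acyclic {G : SimpleGraph α} [Fintype α] (hac : G.IsAcyclic)
    (hdeg : ∀ v, G.degree v ≤ 4) (s : Set α) [Fintype s] (hc : (G.induce s).Connected) :
    InGV (G.induce s) (2 * Fintype.card s + 2) := by
  have hacs : (G.induce s).IsAcyclic := acyclic_induce hac s
  have htr : (G.induce s).IsTree := ⟨hc, hacs⟩
  have h1 : (G.induce s).edgeFinset.card + 1 = Fintype.card s := htr.card_edgeFinset
  refine ⟨hc, isAcyclic_iff_forall_edge_isBridge.mp hacs, ?_, by
    rw [← h1]; convert (show 2 * ((G.induce s).edgeFinset.card + 1) + 2 + 2 * (G.induce s).edgeFinset.card = 4 * ((G.induce s).edgeFinset.card + 1) by ring)⟩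
  intro v
  calc (G.induce s).degree v ≤ G.degree v.val := by
        classical
        rw [← card_neighborFinset_eq_degree, ← card_neighborFinset_eq_degree]
        refine Finset.card_le_card_of_injOn Subtype.val ?_ Subtype.val_injective.injOn
        intro w hw
        simp only [Finset.mem_coe, SimpleGraph.mem_neighborFinset] at *
        exact hw
  _ ≤ 4 := hdeg _

end GVAux

set_option maxHeartbeats 1000000 in
open SimpleGraph GVAux in
/-- Proposition `thm:G_V`: for a connected gluing `G` of quartic bubbles
along dashed lines with `V ≥ 6` free tensor-vertices, the following are equivalent:
(a) every dashed line is an edge-cut (`G ∈ 𝔾_V`);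
(b) every dashed line splits `G` into `G₁ ∈ 𝔾_{V₁}` and `G₂ ∈ 𝔾_{V₂}` with `V₁ + V₂ = V + 2`;
(c) `G` is obtained from some `G' ∈ 𝔾_{V-2}` by attaching one quartic bubble along a single
dashed line (i.e. some bubble is a leaf whose removal leaves a graph in `𝔾_{V-2}`). -/
theorem GV_characterisation {α : Type*} [Fintype α] (G : SimpleGraph α) (V : ℕ)
    (hconn : G.Connected) (hdeg : ∀ v, G.degree v ≤ 4)
    (hV : V + 2 * G.edgeFinset.card = 4 * Fintype.card α) (hV6 : 6 ≤ V) :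
    ((∀ e ∈ G.edgeSet, G.IsBridge e) ↔
      (∀ u v : α, G.Adj u v → ∃ V₁ V₂ : ℕ,
        InGV (G.induce {w | (G.deleteEdges {s(u, v)}).Reachable u w}) V₁ ∧
        InGV (G.induce {w | (G.deleteEdges {s(u, v)}).Reachable v w}) V₂ ∧
        V₁ + V₂ = V + 2)) ∧
    ((∀ e ∈ G.edgeSet, G.IsBridge e) ↔
      (∃ b : α, G.degree b = 1 ∧ InGV (G.induce {w | w ≠ b}) (V - 2))) := by
  classical
  constructor
  · constructor
    · -- (a) → (b)
      intro ha u v huv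
      have hac : G.IsAcyclic := isAcyclic_iff_forall_edge_isBridge.mpr ha
      have htree : G.IsTree := ⟨hconn, hac⟩
      have hE : G.edgeFinset.card + 1 = Fintype.card α := htree.card_edgeFinset
      have hbr : ¬ (G.deleteEdges {s(u, v)}).Reachable u v :=
        (isBridge_iff.mp (ha _ ((G.mem_edgeSet).mpr huv)))
      have hdis : ∀ w, (G.deleteEdges {s(u, v)}).Reachable u w →
          (G.deleteEdges {s(u, v)}).Reachable v w → False :=
        fun w h1 h2 => hbr (h1.trans h2.symm)
      have hcov : ∀ w, (G.deleteEdges {s(u, v)}).Reachable u w ∨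
          (G.deleteEdges {s(u, v)}).Reachable v w :=
        fun w => reach_side ((hconn u w).some) (Or.inl (.refl _))
      have hcomp : ∀ a : α,
          (G.induce {w | (G.deleteEdges {s(u, v)}).Reachable a w}).Connected := by
        intro a
        rw [SimpleGraph.connected_iff]
        refine ⟨?_, ⟨⟨a, show (G.deleteEdges {s(u, v)}).Reachable a a from .refl _⟩⟩⟩
        rintro ⟨x, hx⟩ ⟨y, hy⟩
        have hux : ∀ {w : α} (hw : w ∈ {w | (G.deleteEdges {s(u, v)}).Reachable a w}),
            (G.induce {w | (G.deleteEdges {s(u, v)}).Reachable a w}).Reachable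
              ⟨a, .refl _⟩ ⟨w, hw⟩ := by
          intro w hw
          obtain ⟨p⟩ := (hw : (G.deleteEdges {s(u, v)}).Reachable a w)
          refine reachable_induce_of_walk (G.deleteEdges_le _) p ?_ _ _
          intro z hz
          exact ⟨p.takeUntil z hz⟩
        exact (hux hx).symm.trans (hux hy)
      refine ⟨2 * Fintype.card {w | (G.deleteEdges {s(u, v)}).Reachable u w} + 2,
        2 * Fintype.card {w | (G.deleteEdges {s(u, v)}).Reachable v w} + 2,
        InGV_induce_of_acyclic hac hdeg _ (hcomp u),
        InGV_induce_of_acyclic hac hdeg _ (hcomp v), ?_⟩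
      have hsum : Fintype.card {w | (G.deleteEdges {s(u, v)}).Reachable u w} +
          Fintype.card {w | (G.deleteEdges {s(u, v)}).Reachable v w} = Fintype.card α := by
        have e2 : Fintype.card {w | (G.deleteEdges {s(u, v)}).Reachable v w} =
            Fintype.card {x // ¬ (G.deleteEdges {s(u, v)}).Reachable u x} :=
          Fintype.card_congr (Equiv.subtypeEquivRight (fun x =>
            ⟨fun h2 h1 => hdis x h1 h2, fun h1 => (hcov x).resolve_left h1⟩))
        have e1 : Fintype.card {w | (G.deleteEdges {s(u, v)}).Reachable u w} =
            Fintype.card {x // (G.deleteEdges {s(u, v)}).Reachable u x} :=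
          Fintype.card_congr (Equiv.refl _)
        have e3 := Fintype.card_subtype_compl (fun x => (G.deleteEdges {s(u, v)}).Reachable u x)
        have e4 := Fintype.card_subtype_le (fun x => (G.deleteEdges {s(u, v)}).Reachable u x)
        omega
      omega
    · -- (b) → (a)
      intro hb
      by_cases hacy : G.IsAcyclic
      · exact fun e he => isAcyclic_iff_forall_edge_isBridge.mp hacy he
      · exfalso
        simp only [SimpleGraph.IsAcyclic, not_forall, not_not] at hacy
        obtain ⟨a, c, hc⟩ := hacy
        obtain ⟨x, hax, t, hct⟩ := SimpleGraph.Walk.not_nil_iff.mp hc.not_nil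
        have hre : (G.deleteEdges {s(a, x)}).Reachable a x := by
          have := (SimpleGraph.adj_and_reachable_delete_edges_iff_exists_cycle
            (G := G) (v := a) (w := x)).mpr ⟨a, c, hc, by rw [hct]; simp⟩
          exact this.2
        obtain ⟨V₁, V₂, h1, h2, h12⟩ := hb a x hax
        have hall : ∀ w, (G.deleteEdges {s(a, x)}).Reachable a w :=
          fun w => reach_all hre ((hconn a w).some)
        obtain ⟨q, hq⟩ := walk_lift (s := {w | (G.deleteEdges {s(a, x)}).Reachable a w}) c
          (fun z _ => hall z) (hall a) (hall a)
        have hc2 : (q.map (SimpleGraph.Embedding.induce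
            {w | (G.deleteEdges {s(a, x)}).Reachable a w}).toHom).IsCycle := by
          rw [hq]; exact hc
        have hqc : q.IsCycle :=
          (SimpleGraph.Walk.map_isCycle_iff_of_injective
            (by exact Subtype.val_injective)).mp hc2
        exact (isAcyclic_iff_forall_edge_isBridge.mpr h1.2.1) q hqc
  · constructor
    · -- (a) → (c)
      intro ha
      have hac : G.IsAcyclic := isAcyclic_iff_forall_edge_isBridge.mpr ha
      have htree : G.IsTree := ⟨hconn, hac⟩
      have hE : G.edgeFinset.card + 1 = Fintype.card α := htree.card_edgeFinset
      have hn2 : 2 ≤ Fintype.card α := by omega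
      obtain ⟨b, hb1⟩ : ∃ b : α, G.degree b = 1 := by
        by_contra h
        push_neg at h
        have hdeg2 : ∀ v, 2 ≤ G.degree v := by
          intro v
          obtain ⟨w, hw⟩ := Fintype.exists_ne_of_one_lt_card hn2 v
          have hpos : 0 < G.degree v := by
            rw [G.degree_pos_iff_exists_adj]
            obtain ⟨p⟩ := hconn v w
            cases p with
            | nil => exact absurd rfl hw
            | cons hadj _ => exact ⟨_, hadj⟩
          have := h v
          omega
        have hsum := G.sum_degrees_eq_twice_card_edges
        have hsum2 : 2 * Fintype.card α ≤ ∑ v, G.degree v := by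
          calc 2 * Fintype.card α = ∑ _v : α, 2 := by
                rw [Finset.sum_const, Finset.card_univ, smul_eq_mul, mul_comm]
          _ ≤ _ := Finset.sum_le_sum (fun v _ => hdeg2 v)
        omega
      refine ⟨b, hb1, ?_⟩
      have hconn' : (G.induce {w | w ≠ b}).Connected := by
        obtain ⟨a, hab⟩ := Fintype.exists_ne_of_one_lt_card hn2 b
        rw [SimpleGraph.connected_iff]
        refine ⟨?_, ⟨⟨a, hab⟩⟩⟩
        rintro ⟨x, hx⟩ ⟨y, hy⟩
        obtain ⟨p, hp⟩ : ∃ p : G.Walk x y, p.IsPath :=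
          ⟨((hconn x y).some.toPath : G.Path x y).1, ((hconn x y).some.toPath : G.Path x y).2⟩
        have hbp : b ∉ p.support := by
          intro hbp
          have h2 := two_le_degree_of_path_internal p hp hbp
            (fun h => (hx : x ≠ b) h.symm) (fun h => (hy : y ≠ b) h.symm)
          omega
        exact reachable_induce_of_walk le_rfl p
          (fun z hz => show z ≠ b from fun hzb => hbp (hzb ▸ hz)) hx hy
      have hkey := InGV_induce_of_acyclic hac hdeg {w | w ≠ b} hconn'
      have hcard : Fintype.card {w : α | w ≠ b} = Fintype.card α - 1 := by
        have h1 : Fintype.card {w : α | w ≠ b} = Fintype.card {w : α // ¬ (w = b)} :=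
          Fintype.card_congr (Equiv.refl _)
        rw [h1, Fintype.card_subtype_compl, Fintype.card_subtype_eq]
      have hVeq : V - 2 = 2 * Fintype.card {w : α | w ≠ b} + 2 := by omega
      rwa [hVeq]
    · -- (c) → (a)
      rintro ⟨b, hb1, hIn⟩
      by_cases hacy : G.IsAcyclic
      · exact fun e he => isAcyclic_iff_forall_edge_isBridge.mp hacy he
      · exfalso
        simp only [SimpleGraph.IsAcyclic, not_forall, not_not] at hacy
        obtain ⟨a, c, hc⟩ := hacy
        by_cases hbc : b ∈ c.support
        · have h2 := two_le_degree_of_cycle c hc hbc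
          omega
        · have haS : a ∈ {w : α | w ≠ b} := fun h => hbc (h ▸ c.start_mem_support)
          obtain ⟨q, hq⟩ := walk_lift (s := {w | w ≠ b}) c
            (fun z hz => show z ≠ b from fun hzb => hbc (hzb ▸ hz)) haS haS
          have hc2 : (q.map (SimpleGraph.Embedding.induce
              {w : α | w ≠ b}).toHom).IsCycle := by
            rw [hq]; exact hc
          have hqc : q.IsCycle :=
            (SimpleGraph.Walk.map_isCycle_iff_of_injective
              (by exact Subtype.val_injective)).mp hc2
          exact (isAcyclic_iff_forall_edge_isBridge.mpr hIn.2.1) q hqc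
end

section
/- Let M be a connected combinatorial map with edges decorated by color sets C_e with |C_e| = d/2, and suppose M consists of a single cycle whose edges carry at least two distinct color sets. Then Σ_{c=1}^d F_c(M) < Σ_{c=1}^d F_c(M') where M' is the map obtained by unhooking one edge of the cycle; consequently δ(M) < d for such a cycle, so a map maximizing δ cannot contain a cycle with edges of multiple color types. -/
attribute [local instance] Classical.propDecidable

open Function

/-- Number of orbits of a self-map: classes of the equivalence generated by `x ~ f x`. -/
noncomputable def numOrbits {D : Type*} (f : D → D) : ℕ :=
  Nat.card (Quotient (Relation.EqvGen.setoid fun x y => f x = y))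

/-- Connectivity of a combinatorial map given by its rotation `σ` and dart-reversal `α`. -/
def MapConnected {D : Type*} (σ α : D → D) : Prop :=
  ∀ x y : D, Relation.EqvGen (fun a b => σ a = b ∨ α a = b) x y

variable {D : Type*} [Fintype D] [DecidableEq D]

/-- Induced rotation on a subset of darts: first return of `σ` to `S`. -/
noncomputable def indSigma (σ : D → D) (S : Finset D) (y : {z : D // z ∈ S}) :
    {z : D // z ∈ S} :=
  if h : ∃ k : ℕ, 0 < k ∧ σ^[k] y.1 ∈ S then ⟨σ^[Nat.find h] y.1, (Nat.find_spec h).2⟩ else y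

/-- Restriction of the dart-reversal to a subset of darts. -/
noncomputable def indAlpha (α : D → D) (S : Finset D) (y : {z : D // z ∈ S}) :
    {z : D // z ∈ S} :=
  if h : α y.1 ∈ S then ⟨α y.1, h⟩ else y

/-- Face successor of a dart of the submap with dart set `S`: reverse the dart,
then take the first return of the rotation to `S`. -/
noncomputable def faceSucc (σ α : D → D) (S : Finset D) (x : {y : D // y ∈ S}) :
    {y : D // y ∈ S} :=
  if h : ∃ k : ℕ, 0 < k ∧ σ^[k] (α x.1) ∈ S then
    ⟨σ^[Nat.find h] (α x.1), (Nat.find_spec h).2⟩ else x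

/-- Number of vertices (σ-orbits) none of whose darts lies in `S`. -/
noncomputable def isolatedVerts (σ : D → D) (S : Finset D) : ℕ :=
  numOrbits (fun x : {y : D // ∀ k : ℕ, σ^[k] y ∉ S} =>
    ⟨σ x.1, fun k hk => x.2 (k + 1) (by rw [Function.iterate_succ_apply]; exact hk)⟩)

/-- Darts of the submap of color `c`. -/
def colorDarts {d : ℕ} (col : D → Finset (Fin d)) (c : Fin d) : Finset D :=
  Finset.univ.filter fun x => c ∈ col x

/-- Number of faces of color `c`, isolated vertices counting as one face each. -/
noncomputable def Fc {d : ℕ} (σ α : D → D) (col : D → Finset (Fin d)) (c : Fin d) : ℕ :=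
  numOrbits (faceSucc σ α (colorDarts col c)) + isolatedVerts σ (colorDarts col c)

/-- Number of edges decorated by the color set `C`. -/
def bCnt {d : ℕ} (col : D → Finset (Fin d)) (C : Finset (Fin d)) : ℕ :=
  (Finset.univ.filter fun x => col x = C).card / 2

/-- `δ(M) = Σ_c F_c(M) + Σ_C s_C b_C(M)`. -/
noncomputable def deltaMap {d : ℕ} (σ α : D → D) (col : D → Finset (Fin d))
    (s : Finset (Fin d) → ℤ) : ℤ :=
  (∑ c : Fin d, (Fc σ α col c : ℤ)) + ∑ C : Finset (Fin d), s C * (bCnt col C : ℤ)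

/-- A proper decorated map: `σ` is a permutation of the darts, `α` is a fixed-point-free
involution, the decoration is constant on edges, and the map is connected. -/
def ProperMap {d : ℕ} (σ α : D → D) (col : D → Finset (Fin d)) : Prop :=
  Function.Bijective σ ∧ (∀ x, α (α x) = x) ∧ (∀ x, α x ≠ x) ∧
    (∀ x, col (α x) = col x) ∧ MapConnected σ α

/-- Darts remaining after deleting the edge of the dart `x0`. -/
def delDarts (α : D → D) (x0 : D) : Finset D := Finset.univ \ {x0, α x0}

/-- The edge of the dart `x0` is a bridge: its deletion disconnects the map. -/
def IsBridgeDart (σ α : D → D) (x0 : D) : Prop :=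
  ¬ MapConnected (indSigma σ (delDarts α x0)) (indAlpha α (delDarts α x0))

/-- Unhooking the dart `x0` from its vertex: `x0` becomes a new univalent vertex. -/
def unhookSigma (σ : D → D) (x0 : D) : D → D :=
  fun y => if y = x0 then x0 else if σ y = x0 then σ x0 else σ y

section AuxCMC
open Finset

lemma nt_pair (m l : ℕ) (hm : 0 < m) :
    ((range m).filter fun k => (2*k) % m = l % m).card +
    ((range m).filter fun k => (2*k+1) % m = l % m).card = 2 := by
  classical
  have hlm : l % m < m := Nat.mod_lt _ hm
  have hA : (range (2*m)).filter (fun j => j % m = l % m) = {l % m, l % m + m} := by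
    ext j
    simp only [mem_filter, mem_range, mem_insert, mem_singleton]
    constructor
    · rintro ⟨hj, hmod⟩
      rcases lt_or_ge j m with h | h
      · left; rw [Nat.mod_eq_of_lt h] at hmod; omega
      · right; rw [Nat.mod_eq_sub_mod h, Nat.mod_eq_of_lt (by omega)] at hmod; omega
    · rintro (rfl | rfl)
      · exact ⟨by omega, Nat.mod_eq_of_lt hlm⟩
      · constructor
        · omega
        · rw [Nat.add_mod_right, Nat.mod_eq_of_lt hlm]
  have hcardA : ((range (2*m)).filter (fun j => j % m = l % m)).card = 2 := by
    rw [hA]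
    rw [card_insert_of_notMem (by simp; omega), card_singleton]
  have hsplit := card_filter_add_card_filter_not
    (s := (range (2*m)).filter (fun j => j % m = l % m)) (p := fun j => j % 2 = 0)
  have hev : ((range (2*m)).filter (fun j => j % m = l % m)).filter (fun j => j % 2 = 0)
      = ((range m).filter fun k => (2*k) % m = l % m).image (fun k => 2*k) := by
    ext j
    simp only [mem_filter, mem_range, mem_image]
    constructor
    · rintro ⟨⟨hj, hmod⟩, hpar⟩
      exact ⟨j / 2, ⟨by omega, by rw [show 2 * (j/2) = j by omega]; exact hmod⟩, by omega⟩
    · rintro ⟨k, ⟨hk, hmod⟩, rfl⟩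
      exact ⟨⟨by omega, hmod⟩, by omega⟩
  have hod : ((range (2*m)).filter (fun j => j % m = l % m)).filter (fun j => ¬ j % 2 = 0)
      = ((range m).filter fun k => (2*k+1) % m = l % m).image (fun k => 2*k+1) := by
    ext j
    simp only [mem_filter, mem_range, mem_image]
    constructor
    · rintro ⟨⟨hj, hmod⟩, hpar⟩
      exact ⟨j / 2, ⟨by omega, by rw [show 2 * (j/2) + 1 = j by omega]; exact hmod⟩, by omega⟩
    · rintro ⟨k, ⟨hk, hmod⟩, rfl⟩
      exact ⟨⟨by omega, hmod⟩, by omega⟩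
  rw [hev, hod, Finset.card_image_of_injective _ (fun a b => by omega),
    Finset.card_image_of_injective _ (fun a b => by omega), hcardA] at hsplit
  exact hsplit


section Orbits
variable {X : Type*}

lemma eqvGen_chain (f : X → X) (x : X) (k : ℕ) :
    Relation.EqvGen (fun a b => f a = b) x (f^[k] x) := by
  induction k with
  | zero => exact Relation.EqvGen.refl x
  | succ n ih =>
    refine Relation.EqvGen.trans _ _ _ ih (Relation.EqvGen.rel _ _ ?_)
    rw [Function.iterate_succ_apply']

lemma eqvGen_iff_orbit {f : X → X} (hf : Function.Injective f) {x y : X} :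
    Relation.EqvGen (fun a b => f a = b) x y ↔ ∃ k : ℕ, f^[k] x = y ∨ f^[k] y = x := by
  constructor
  · intro h
    induction h with
    | rel a b hab => exact ⟨1, Or.inl hab⟩
    | refl a => exact ⟨0, Or.inl rfl⟩
    | symm a b _ ih => rcases ih with ⟨k, hk | hk⟩
                       exacts [⟨k, Or.inr hk⟩, ⟨k, Or.inl hk⟩]
    | trans a b c _ _ ih1 ih2 =>
      rcases ih1 with ⟨k, hk | hk⟩ <;> rcases ih2 with ⟨j, hj | hj⟩
      · exact ⟨j + k, Or.inl (by rw [Function.iterate_add_apply, hk, hj])⟩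
      · rcases le_total k j with h | h
        · refine ⟨j - k, Or.inr (hf.iterate k ?_)⟩
          rw [← Function.iterate_add_apply, Nat.add_sub_cancel' h, hj, hk]
        · refine ⟨k - j, Or.inl (hf.iterate j ?_)⟩
          rw [← Function.iterate_add_apply, Nat.add_sub_cancel' h, hk, hj]
      · rcases le_total k j with h | h
        · refine ⟨j - k, Or.inl ?_⟩
          rw [← hk, ← Function.iterate_add_apply, Nat.sub_add_cancel h, hj]
        · refine ⟨k - j, Or.inr ?_⟩
          rw [← hj, ← Function.iterate_add_apply, Nat.sub_add_cancel h, hk]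
      · exact ⟨k + j, Or.inr (by rw [Function.iterate_add_apply, hj, hk])⟩
  · rintro ⟨k, hk | hk⟩
    · rw [← hk]; exact eqvGen_chain f x k
    · rw [← hk]; exact (eqvGen_chain f y k).symm _ _
end Orbits

section Count
variable {X : Type*} [Fintype X]

lemma two_mul_numOrbits (f τ : X → X)
    (hτ : ∀ x, τ (τ x) = x)
    (hrel : ∀ x, f (τ (f x)) = τ x)
    (hmeet : ∀ x : X, ∃ k : ℕ, f (f^[k] x) = τ (f^[k] x) ∨ τ (f^[k] x) = f^[k] x) :
    2 * numOrbits f =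
      Nat.card {x : X // f x = τ x} + Nat.card {x : X // τ x = x} := by
  classical
  have hconv : ∀ P : X → Prop, Nat.card {x : X // P x} = (Finset.univ.filter P).card := by
    intro P
    rw [Nat.card_eq_fintype_card, Fintype.card_subtype]
  rw [hconv, hconv]
  -- f is bijective
  have h1 : ∀ x, f (τ (f (τ x))) = x := fun x => by rw [hrel (τ x), hτ]
  have h2 : ∀ x, τ (f (τ (f x))) = x := fun x => by rw [hrel x, hτ]
  have hfbij : Function.Bijective f := by
    constructor
    · intro a b hab
      have := h2 a; rw [hab, h2 b] at this; exact this.symm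
    · intro y; exact ⟨τ (f (τ y)), h1 y⟩
  set e : Equiv.Perm X := Equiv.ofBijective f hfbij with he
  have hef : ∀ x, e x = f x := fun _ => rfl
  have hesymm : ∀ x, f (e.symm x) = x := fun x => e.apply_symm_apply x
  -- conjugation
  have hconj : ∀ (k : ℕ) (x : X), τ (f^[k] x) = (⇑e.symm)^[k] (τ x) := by
    intro k
    induction k with
    | zero => intro x; rfl
    | succ n ih =>
      intro x
      rw [Function.iterate_succ_apply, Function.iterate_succ_apply, ih (f x)]
      congr 1
      apply hfbij.injective
      rw [hesymm, hrel]
  have hcan : ∀ (k : ℕ) (w : X), f^[k] ((⇑e.symm)^[k] w) = w := by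
    intro k
    induction k with
    | zero => intro w; rfl
    | succ n ih =>
      intro w
      rw [Function.iterate_succ_apply', Function.iterate_succ_apply, ih, hesymm]
  -- quotient setup
  set st := Relation.EqvGen.setoid (fun x y : X => f x = y) with hst
  haveI : Fintype (Quotient st) := Fintype.ofFinite _
  have hnum : numOrbits f = Fintype.card (Quotient st) := by
    rw [numOrbits, Nat.card_eq_fintype_card]
  set π : X → Quotient st := Quotient.mk st with hπ
  have hπeq : ∀ a b : X, π a = π b ↔ Relation.EqvGen (fun x y => f x = y) a b :=
    fun a b => Quotient.eq
  have key : ∀ q : Quotient st,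
      ((Finset.univ.filter fun x => f x = τ x).filter fun x => π x = q).card +
      ((Finset.univ.filter fun x => τ x = x).filter fun x => π x = q).card = 2 := by
    intro q
    induction q using Quotient.inductionOn with
    | h x =>
    obtain ⟨k0, hk0⟩ := hmeet x
    obtain ⟨z, hzdef⟩ : ∃ z, f^[k0] x = z := ⟨_, rfl⟩
    rw [hzdef] at hk0
    have hzx : π z = π x := by
      rw [← hzdef]
      exact ((hπeq _ x).2 ((eqvGen_chain f x k0).symm _ _))
    have hq : ∀ xx : X, (π xx = Quotient.mk st x) ↔ π xx = π z := by
      intro xx; rw [hzx]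
    have hzBΦ : f z = τ z ∨ τ z = z := hk0
    set l : ℕ := if τ z = z then 0 else 1 with hldef
    have hl : τ z = f^[l] z := by
      by_cases h : τ z = z
      · simp [hldef, h]
      · have h2 : f z = τ z := hzBΦ.resolve_right h
        simp only [hldef, if_neg h, Function.iterate_one]
        exact h2.symm
    have hpow : ∀ n : ℕ, f^[n] = ⇑(e ^ n) := fun n => Equiv.Perm.iterate_eq_pow e n
    have hper : IsPeriodicPt f (orderOf e) z := by
      show f^[orderOf e] z = z
      rw [hpow, pow_orderOf_eq_one]
      rfl
    have hmpos : 0 < Function.minimalPeriod f z :=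
      hper.minimalPeriod_pos (orderOf_pos e)
    have hiter_iff : ∀ a b : ℕ, (f^[a] z = f^[b] z) ↔
        a % Function.minimalPeriod f z = b % Function.minimalPeriod f z := by
      intro a b
      rw [← Function.iterate_mod_minimalPeriod_eq (n := a),
        ← Function.iterate_mod_minimalPeriod_eq (n := b)]
      exact Function.iterate_eq_iterate_iff_of_lt_minimalPeriod
        (Nat.mod_lt _ hmpos) (Nat.mod_lt _ hmpos)
    set m := Function.minimalPeriod f z with hmdef
    have hfiber : ∀ xx, (π xx = π z) ↔ ∃ k < m, f^[k] z = xx := by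
      intro xx
      rw [hπeq, eqvGen_iff_orbit hfbij.injective]
      constructor
      · rintro ⟨k, hk | hk⟩
        · -- f^[k] xx = z
          have hle : k ≤ m * k := Nat.le_mul_of_pos_left k hmpos
          have hdvd : m ∣ (k + (m * k - k)) := ⟨k, Nat.add_sub_cancel' hle⟩
          have hpz : f^[k + (m * k - k)] z = z :=
            (Function.isPeriodicPt_iff_minimalPeriod_dvd
              (f := f) (x := z) (n := k + (m * k - k))).mpr hdvd
          rw [Function.iterate_add_apply] at hpz
          have hxx : f^[m * k - k] z = xx := by
            apply hfbij.injective.iterate k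
            rw [hpz, hk]
          refine ⟨(m * k - k) % m, Nat.mod_lt _ hmpos, ?_⟩
          rw [Function.iterate_mod_minimalPeriod_eq, hxx]
        · exact ⟨k % m, Nat.mod_lt _ hmpos,
            by rw [Function.iterate_mod_minimalPeriod_eq, hk]⟩
      · rintro ⟨k, hk, hkeq⟩
        exact ⟨k, Or.inr hkeq⟩
    have hcount : ∀ P : X → Prop,
        ((Finset.univ.filter fun x => P x).filter fun xx => π xx = π z).card
          = ((range m).filter fun k => P (f^[k] z)).card := by
      intro P
      have himg : (Finset.univ.filter fun x => P x).filter (fun xx => π xx = π z)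
          = ((range m).filter fun k => P (f^[k] z)).image (fun k => f^[k] z) := by
        ext xx
        simp only [mem_filter, mem_univ, true_and, mem_image, mem_range]
        constructor
        · rintro ⟨hP, hqq⟩
          obtain ⟨k, hk, hkeq⟩ := (hfiber xx).1 hqq
          exact ⟨k, ⟨hk, by rw [hkeq]; exact hP⟩, hkeq⟩
        · rintro ⟨k, ⟨hk, hP⟩, rfl⟩
          exact ⟨hP, (hfiber _).2 ⟨k, hk, rfl⟩⟩
      rw [himg, Finset.card_image_of_injOn]
      intro a ha b hb hab
      exact Function.iterate_injOn_Iio_minimalPeriod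
        (Set.mem_Iio.2 (mem_range.1 (mem_filter.1 ha).1))
        (Set.mem_Iio.2 (mem_range.1 (mem_filter.1 hb).1)) hab
    have hBcond : ∀ k, (f (f^[k] z) = τ (f^[k] z)) ↔ (2*k+1) % m = l % m := by
      intro k
      rw [hconj k z, hl]
      rw [show f (f^[k] z) = f^[k+1] z from (Function.iterate_succ_apply' f k z).symm]
      constructor
      · intro h
        have h2 := congrArg (f^[k]) h
        rw [hcan k, ← Function.iterate_add_apply] at h2
        have h3 := (hiter_iff (k + (k+1)) l).1 h2
        rw [show k + (k+1) = 2*k+1 by ring] at h3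
        exact h3
      · intro h
        have h2 : f^[k + (k+1)] z = f^[l] z := (hiter_iff _ _).2
          (by rw [show k+(k+1) = 2*k+1 by ring]; exact h)
        rw [Function.iterate_add_apply] at h2
        apply hfbij.injective.iterate k
        rw [hcan k]
        exact h2
    have hΦcond : ∀ k, (τ (f^[k] z) = f^[k] z) ↔ (2*k) % m = l % m := by
      intro k
      rw [hconj k z, hl]
      constructor
      · intro h
        have h2 := congrArg (f^[k]) h
        rw [hcan k, ← Function.iterate_add_apply] at h2
        have h3 := (hiter_iff l (k + k)).1 h2
        rw [show k + k = 2*k by ring] at h3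
        exact h3.symm
      · intro h
        have h2 : f^[l] z = f^[k + k] z := (hiter_iff _ _).2
          (by rw [show k+k = 2*k by ring]; exact h.symm)
        apply hfbij.injective.iterate k
        rw [hcan k, h2, Function.iterate_add_apply]
    have e1 : ((Finset.univ.filter fun xx => f xx = τ xx).filter
        fun xx => π xx = Quotient.mk st x).card
        = ((range m).filter fun k => (2*k+1) % m = l % m).card := by
      rw [filter_congr (fun xx _ => hq xx), hcount (fun xx => f xx = τ xx)]
      congr 1
      apply filter_congr
      intro k _
      first
      | exact hBcond k
      | exact propext (hBcond k)
    have e2 : ((Finset.univ.filter fun xx => τ xx = xx).filter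
        fun xx => π xx = Quotient.mk st x).card
        = ((range m).filter fun k => (2*k) % m = l % m).card := by
      rw [filter_congr (fun xx _ => hq xx), hcount (fun xx => τ xx = xx)]
      congr 1
      apply filter_congr
      intro k _
      first
      | exact hΦcond k
      | exact propext (hΦcond k)
    rw [e1, e2, Nat.add_comm]
    exact nt_pair m l hmpos
  rw [hnum]
  calc 2 * Fintype.card (Quotient st)
      = ∑ _q : Quotient st, 2 := by
        rw [Finset.sum_const, card_univ, smul_eq_mul, Nat.mul_comm]
    _ = ∑ q : Quotient st,
        (((Finset.univ.filter fun x => f x = τ x).filter fun x => π x = q).card +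
         ((Finset.univ.filter fun x => τ x = x).filter fun x => π x = q).card) :=
        Finset.sum_congr rfl (fun q _ => (key q).symm)
    _ = _ := by
        rw [Finset.sum_add_distrib,
          ← Finset.card_eq_sum_card_fiberwise (f := π) (fun x _ => Finset.mem_univ _),
          ← Finset.card_eq_sum_card_fiberwise (f := π) (fun x _ => Finset.mem_univ _)]
end Count

section Small
variable {X : Type*}

lemma numOrbits_empty [IsEmpty X] (f : X → X) : numOrbits f = 0 := by
  haveI : IsEmpty (Quotient (Relation.EqvGen.setoid fun x y : X => f x = y)) :=
    ⟨fun q => Quotient.ind (motive := fun _ => False) (fun a => (IsEmpty.false a).elim) q⟩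
  simp [numOrbits]

lemma numOrbits_le_two [Finite X] (f : X → X) (z1 z2 : X)
    (h : ∀ y, Relation.EqvGen (fun a b => f a = b) y z1 ∨
      Relation.EqvGen (fun a b => f a = b) y z2) :
    numOrbits f ≤ 2 := by
  classical
  set st := Relation.EqvGen.setoid (fun x y : X => f x = y) with hst
  haveI : Fintype (Quotient st) := Fintype.ofFinite _
  rw [numOrbits, Nat.card_eq_fintype_card]
  have hsurj : Function.Surjective (fun i : Fin 2 =>
      if i = 0 then Quotient.mk st z1 else Quotient.mk st z2) := by
    intro q
    induction q using Quotient.inductionOn with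
    | h y =>
      rcases h y with hy | hy
      · exact ⟨0, by simpa using (Quotient.eq (r := st)).2 hy.symm ⟩
      · exact ⟨1, by simpa using (Quotient.eq (r := st)).2 hy.symm ⟩
  simpa using Fintype.card_le_of_surjective _ hsurj
end Small


section Face
variable (s α : D → D) (S : Finset D)

lemma invol_sq (hs : ∀ y, s (s y) = y) (v : D) : s^[2] v = v := by
  rw [show (2:ℕ) = 1+1 from rfl, Function.iterate_add_apply]
  simp [hs]

lemma invol_iterate (hs : ∀ y, s (s y) = y) :
    ∀ (k : ℕ) (y : D), s^[k] y = y ∨ s^[k] y = s y := by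
  intro k
  induction k with
  | zero => exact fun y => Or.inl rfl
  | succ n ih =>
    intro y
    rw [Function.iterate_succ_apply']
    rcases ih y with h | h
    · right; rw [h]
    · left; rw [h, hs]

lemma faceSucc_eq (hs : ∀ y, s (s y) = y) (hSα : ∀ y ∈ S, α y ∈ S)
    (x : {y : D // y ∈ S}) :
    faceSucc s α S x =
      if h : s (α x.1) ∈ S then ⟨s (α x.1), h⟩ else ⟨α x.1, hSα _ x.2⟩ := by
  have hex : ∃ k : ℕ, 0 < k ∧ s^[k] (α x.1) ∈ S :=
    ⟨2, by norm_num, by rw [invol_sq s hs]; exact hSα _ x.2⟩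
  rw [faceSucc, dif_pos hex]
  by_cases h : s (α x.1) ∈ S
  · have hfind : Nat.find hex = 1 := by
      rw [Nat.find_eq_iff]
      refine ⟨⟨Nat.one_pos, by simpa using h⟩, ?_⟩
      intro n hn
      interval_cases n
      simp
    rw [dif_pos h]
    exact Subtype.ext (by show s^[Nat.find hex] (α x.1) = _; rw [hfind]; simp)
  · have hfind : Nat.find hex = 2 := by
      rw [Nat.find_eq_iff]
      refine ⟨⟨by norm_num, by rw [invol_sq s hs]; exact hSα _ x.2⟩, ?_⟩
      intro n hn
      interval_cases n
      · simp
      · simp only [Nat.lt_irrefl, Function.iterate_one]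
        tauto
    rw [dif_neg h]
    exact Subtype.ext (by show s^[Nat.find hex] (α x.1) = _; rw [hfind]
                          exact invol_sq s hs _)
end Face

lemma card_subtype_filter (S : Finset D) (P : D → Prop) :
    (Finset.univ.filter fun x : {y : D // y ∈ S} => P x.1).card = (S.filter P).card := by
  classical
  apply Finset.card_bij (fun x _ => x.1)
  · intro a ha
    simp only [mem_filter, mem_univ, true_and] at ha
    exact mem_filter.2 ⟨a.2, ha⟩
  · intro a _ b _ hab
    exact Subtype.ext hab
  · intro b hb
    rcases mem_filter.1 hb with ⟨hbS, hbP⟩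
    exact ⟨⟨b, hbS⟩, by simp [hbP], rfl⟩

lemma card_subtype_filter' (P Q : D → Prop) :
    (Finset.univ.filter fun x : {y : D // P y} => Q x.1).card
      = (Finset.univ.filter fun y => P y ∧ Q y).card := by
  classical
  apply Finset.card_bij (fun x _ => x.1)
  · intro a ha
    simp only [mem_filter, mem_univ, true_and] at ha ⊢
    exact ⟨a.2, ha⟩
  · intro a _ b _ hab
    exact Subtype.ext hab
  · intro b hb
    rcases mem_filter.1 hb with ⟨_, hbP, hbQ⟩
    exact ⟨⟨b, hbP⟩, by simp [hbQ], rfl⟩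

lemma two_mul_fc (s α : D → D) (hs : ∀ y, s (s y) = y) (hα : ∀ y, α (α y) = y)
    (hαne : ∀ y, α y ≠ y) (S : Finset D) (hSα : ∀ y ∈ S, α y ∈ S)
    (hmeet : ∀ x : {y : D // y ∈ S}, ∃ k : ℕ,
      s (α ((faceSucc s α S)^[k] x).1) ∉ S ∨
      s (α ((faceSucc s α S)^[k] x).1) = α ((faceSucc s α S)^[k] x).1) :
    2 * (numOrbits (faceSucc s α S) + isolatedVerts s S) =
      (Fintype.card D - S.card) + (Finset.univ.filter fun y => s y = y).card := by
  classical
  set τ : {y : D // y ∈ S} → {y : D // y ∈ S} := fun x => ⟨α x.1, hSα _ x.2⟩ with hτdef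
  set g := faceSucc s α S with hgdef
  have hgval : ∀ x : {y : D // y ∈ S}, g x =
      if h : s (α x.1) ∈ S then ⟨s (α x.1), h⟩ else ⟨α x.1, hSα _ x.2⟩ :=
    fun x => faceSucc_eq s α S hs hSα x
  have hτ2 : ∀ x, τ (τ x) = x := fun x => Subtype.ext (hα _)
  have hrel : ∀ x, g (τ (g x)) = τ x := by
    intro x
    by_cases h : s (α x.1) ∈ S
    · have h1 : g x = ⟨s (α x.1), h⟩ := by rw [hgval]; exact dif_pos h
      have hc : s (α (α (s (α x.1)))) ∈ S := by rw [hα, hs]; exact hSα _ x.2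
      have h3 : g (τ (g x)) = ⟨s (α (α (s (α x.1)))), hc⟩ := by
        rw [h1, hgval]
        exact dif_pos hc
      rw [h3]
      exact Subtype.ext (by show s (α (α (s (α x.1)))) = α x.1; rw [hα, hs])
    · have h1 : g x = ⟨α x.1, hSα _ x.2⟩ := by rw [hgval]; exact dif_neg h
      have h2 : τ (g x) = x := by rw [h1]; exact Subtype.ext (hα _)
      rw [h2, h1]
  have hB : ∀ x : {y : D // y ∈ S}, (g x = τ x) ↔
      (s (α x.1) ∉ S ∨ s (α x.1) = α x.1) := by
    intro x
    rw [hgval]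
    by_cases h : s (α x.1) ∈ S
    · rw [dif_pos h]
      constructor
      · intro he
        right
        exact congrArg Subtype.val he
      · intro he
        rcases he with he | he
        · exact absurd h he
        · exact Subtype.ext he
    · rw [dif_neg h]
      exact ⟨fun _ => Or.inl h, fun _ => rfl⟩
  have hmeet' : ∀ x, ∃ k, g (g^[k] x) = τ (g^[k] x) ∨ τ (g^[k] x) = g^[k] x := by
    intro x
    obtain ⟨k, hk⟩ := hmeet x
    exact ⟨k, Or.inl ((hB _).2 hk)⟩
  have hface := two_mul_numOrbits g τ hτ2 hrel hmeet'
  have hΦ0 : Nat.card {x : {y : D // y ∈ S} // τ x = x} = 0 := by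
    haveI : IsEmpty {x : {y : D // y ∈ S} // τ x = x} :=
      ⟨fun z => hαne z.1.1 (congrArg Subtype.val z.2)⟩
    exact Nat.card_of_isEmpty
  have hBcard : Nat.card {x : {y : D // y ∈ S} // g x = τ x}
      = (S.filter fun z => s (α z) ∉ S ∨ s (α z) = α z).card := by
    rw [Nat.card_eq_fintype_card, Fintype.card_subtype]
    apply Finset.card_bij (fun (x : {y : D // y ∈ S}) _ => x.1)
    · intro a ha
      exact mem_filter.2 ⟨a.2, (hB a).1 (mem_filter.1 ha).2⟩
    · intro a _ b _ hab
      exact Subtype.ext hab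
    · intro b hb
      rcases mem_filter.1 hb with ⟨hbS, hbc⟩
      refine ⟨⟨b, hbS⟩, ?_, rfl⟩
      simp only [mem_filter, mem_univ, true_and]
      exact (hB _).2 hbc
  have hBα : (S.filter fun z => s (α z) ∉ S ∨ s (α z) = α z).card
      = (S.filter fun z => s z ∉ S ∨ s z = z).card := by
    apply Finset.card_bij (fun z _ => α z)
    · intro a ha
      rcases mem_filter.1 ha with ⟨haS, hac⟩
      exact mem_filter.2 ⟨hSα _ haS, hac⟩
    · intro a ha b hb hab
      have := congrArg α hab
      rwa [hα, hα] at this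
    · intro b hb
      rcases mem_filter.1 hb with ⟨hbS, hbc⟩
      refine ⟨α b, mem_filter.2 ⟨hSα _ hbS, ?_⟩, hα b⟩
      rwa [hα]
  have hsplit1 : (S.filter fun z => s z ∉ S ∨ s z = z).card
      = (S.filter fun z => s z ∉ S).card + (S.filter fun z => s z = z).card := by
    rw [Finset.filter_or, Finset.card_union_of_disjoint]
    rw [Finset.disjoint_filter]
    intro z hz h1 h2
    exact h1 (by rwa [h2])
  have hswap : (S.filter fun z => s z ∉ S).card
      = ((Finset.univ \ S).filter fun z => s z ∈ S).card := by
    apply Finset.card_bij (fun z _ => s z)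
    · intro a ha
      rcases mem_filter.1 ha with ⟨haS, hac⟩
      exact mem_filter.2 ⟨by simp [hac], by rw [hs]; exact haS⟩
    · intro a ha b hb hab
      have := congrArg s hab
      rwa [hs, hs] at this
    · intro b hb
      rcases mem_filter.1 hb with ⟨hbS, hbc⟩
      simp only [mem_sdiff, mem_univ, true_and] at hbS
      refine ⟨s b, mem_filter.2 ⟨hbc, by rwa [hs]⟩, hs b⟩
  -- isolated part
  have hPiff : ∀ y, (∀ k : ℕ, s^[k] y ∉ S) ↔ (y ∉ S ∧ s y ∉ S) := by
    intro y
    constructor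
    · exact fun hy => ⟨hy 0, hy 1⟩
    · rintro ⟨h0, h1⟩ k
      rcases invol_iterate s hs k y with h | h <;> rw [h] <;> assumption
  set ι : {y : D // ∀ k : ℕ, s^[k] y ∉ S} → {y : D // ∀ k : ℕ, s^[k] y ∉ S} :=
    fun x => ⟨s x.1, fun k hk => x.2 (k + 1)
      (by rw [Function.iterate_succ_apply]; exact hk)⟩ with hιdef
  have hiso : isolatedVerts s S = numOrbits ι := rfl
  have hι2 : ∀ x, ι (ι x) = x := fun x => Subtype.ext (hs _)
  have hisoc := two_mul_numOrbits ι ι hι2 (fun x => by rw [hι2]) (fun x => ⟨0, Or.inl rfl⟩)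
  have c1 : Nat.card {x : {y : D // ∀ k : ℕ, s^[k] y ∉ S} // ι x = ι x}
      = ((Finset.univ \ S).filter fun z => s z ∉ S).card := by
    rw [Nat.card_eq_fintype_card, Fintype.card_subtype]
    apply Finset.card_bij (fun (x : {y : D // ∀ k : ℕ, s^[k] y ∉ S}) _ => x.1)
    · intro a _
      rcases (hPiff a.1).1 a.2 with ⟨h0, h1⟩
      exact mem_filter.2 ⟨mem_sdiff.2 ⟨mem_univ _, h0⟩, h1⟩
    · intro a _ b _ hab
      exact Subtype.ext hab
    · intro b hb
      rcases mem_filter.1 hb with ⟨hbU, hb1⟩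
      have hb0 := (mem_sdiff.1 hbU).2
      exact ⟨⟨b, (hPiff b).2 ⟨hb0, hb1⟩⟩, by simp, rfl⟩
  have c2 : Nat.card {x : {y : D // ∀ k : ℕ, s^[k] y ∉ S} // ι x = x}
      = ((Finset.univ \ S).filter fun z => s z = z).card := by
    rw [Nat.card_eq_fintype_card, Fintype.card_subtype]
    apply Finset.card_bij (fun (x : {y : D // ∀ k : ℕ, s^[k] y ∉ S}) _ => x.1)
    · intro a ha
      have hfa : s a.1 = a.1 := congrArg Subtype.val (mem_filter.1 ha).2
      rcases (hPiff a.1).1 a.2 with ⟨h0, _⟩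
      exact mem_filter.2 ⟨mem_sdiff.2 ⟨mem_univ _, h0⟩, hfa⟩
    · intro a _ b _ hab
      exact Subtype.ext hab
    · intro b hb
      rcases mem_filter.1 hb with ⟨hbU, hbfix⟩
      have hb0 := (mem_sdiff.1 hbU).2
      refine ⟨⟨b, (hPiff b).2 ⟨hb0, by rwa [hbfix]⟩⟩, ?_, rfl⟩
      simp only [mem_filter, mem_univ, true_and]
      exact Subtype.ext hbfix
  -- complement partition
  -- complement partition
  have hcomp : ((Finset.univ \ S).filter fun z => s z ∈ S).card
      + ((Finset.univ \ S).filter fun z => s z ∉ S).card = Fintype.card D - S.card := by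
    have := Finset.card_filter_add_card_filter_not
      (s := Finset.univ \ S) (p := fun z => s z ∈ S)
    rw [Finset.card_sdiff_of_subset (Finset.subset_univ S), Finset.card_univ] at this
    exact this
  -- fix partition
  have hfix : (S.filter fun z => s z = z).card
      + ((Finset.univ \ S).filter fun z => s z = z).card
      = (Finset.univ.filter fun y => s y = y).card := by
    rw [← Finset.card_union_of_disjoint]
    · congr 1
      ext z
      simp only [mem_union, mem_filter, mem_sdiff, mem_univ, true_and]
      tauto
    · rw [Finset.disjoint_left]
      intro a ha hb
      exact (mem_sdiff.1 (mem_filter.1 hb).1).2 (mem_filter.1 ha).1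
  -- final arithmetic
  rw [hiso]
  omega

lemma even_card_subtype (α : D → D) (hα : ∀ y, α (α y) = y) (hαne : ∀ y, α y ≠ y)
    (p : D → Prop) (hp : ∀ y, p y → p (α y)) :
    Even (Nat.card {y : D // p y}) := by
  classical
  set a : {y : D // p y} → {y : D // p y} := fun z => ⟨α z.1, hp _ z.2⟩ with hadef
  have ha2 : ∀ z, a (a z) = z := fun z => Subtype.ext (hα _)
  have h2 := two_mul_numOrbits a a ha2 (fun z => by rw [ha2]) (fun z => ⟨0, Or.inl rfl⟩)
  have e1 : Nat.card {z : {y : D // p y} // a z = a z} = Nat.card {y : D // p y} :=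
    Nat.card_congr (Equiv.subtypeUnivEquiv (fun z => rfl))
  have e2 : Nat.card {z : {y : D // p y} // a z = z} = 0 := by
    haveI : IsEmpty {z : {y : D // p y} // a z = z} :=
      ⟨fun w => hαne w.1.1 (congrArg Subtype.val w.2)⟩
    exact Nat.card_of_isEmpty
  rw [e1, e2] at h2
  exact ⟨numOrbits a, by omega⟩

lemma meet_lemma (s α σb : D → D) (hs : ∀ y, s (s y) = y) (hα : ∀ y, α (α y) = y)
    (hσb : ∀ y, σb (σb y) = y)
    (S : Finset D) (hSα : ∀ y ∈ S, α y ∈ S)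
    (hσs : ∀ y, s y ≠ y → s y = σb y)
    (hconn : MapConnected σb α)
    (hend : (∃ z, s z = z) ∨ ∃ w, w ∉ S) :
    ∀ x : {y : D // y ∈ S}, ∃ k : ℕ,
      s (α ((faceSucc s α S)^[k] x).1) ∉ S ∨
      s (α ((faceSucc s α S)^[k] x).1) = α ((faceSucc s α S)^[k] x).1 := by
  classical
  by_contra hcon
  push_neg at hcon
  obtain ⟨x, hx⟩ := hcon
  set g := faceSucc s α S with hgdef
  set ρ : D → D := fun y => s (α y) with hρdef
  have hρinj : Function.Injective ρ := by
    intro a b hab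
    have h1 := congrArg s hab
    rw [hs, hs] at h1
    have h2 := congrArg α h1
    rwa [hα, hα] at h2
  have hstep : ∀ k : ℕ, (g^[k] x).1 = ρ^[k] x.1 := by
    intro k
    induction k with
    | zero => rfl
    | succ n ih =>
      rw [Function.iterate_succ_apply', Function.iterate_succ_apply']
      rw [hgdef, faceSucc_eq s α S hs hSα, dif_pos (hx n).1]
      show s (α ((g^[n] x).1)) = ρ (ρ^[n] x.1)
      rw [ih]
  set U : Finset D := Finset.univ.filter (fun y => ∃ k : ℕ, ρ^[k] x.1 = y) with hUdef
  have hUmem : ∀ y, y ∈ U ↔ ∃ k : ℕ, ρ^[k] x.1 = y := by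
    intro y
    simp [hUdef]
  have hUS : ∀ y ∈ U, y ∈ S := by
    intro y hy
    obtain ⟨k, hk⟩ := (hUmem y).1 hy
    rw [← hk, ← hstep k]
    exact (g^[k] x).2
  have hUρ : ∀ y ∈ U, ρ y ∈ U := by
    intro y hy
    obtain ⟨k, hk⟩ := (hUmem y).1 hy
    exact (hUmem _).2 ⟨k+1, by rw [Function.iterate_succ_apply', hk]⟩
  have hUne : ∀ y ∈ U, ρ y ≠ α y := by
    intro y hy
    obtain ⟨k, hk⟩ := (hUmem y).1 hy
    have := (hx k).2
    rw [hstep k, hk] at this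
    exact this
  have hUsurj : ∀ y ∈ U, ∃ u ∈ U, ρ u = y := by
    have himg : U.image ρ = U := by
      apply Finset.eq_of_subset_of_card_le
      · intro y hy
        obtain ⟨u, hu, rfl⟩ := Finset.mem_image.1 hy
        exact hUρ u hu
      · rw [Finset.card_image_of_injective _ hρinj]
    intro y hy
    rw [← himg] at hy
    obtain ⟨u, hu, huy⟩ := Finset.mem_image.1 hy
    exact ⟨u, hu, huy⟩
  set T : Finset D := U ∪ U.image α with hTdef
  have hTα : ∀ y ∈ T, α y ∈ T := by
    intro y hy
    rcases Finset.mem_union.1 hy with h | h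
    · exact Finset.mem_union.2 (Or.inr (Finset.mem_image.2 ⟨y, h, rfl⟩))
    · obtain ⟨u, hu, rfl⟩ := Finset.mem_image.1 h
      rw [hα]
      exact Finset.mem_union.2 (Or.inl hu)
  have hTfixfree : ∀ y ∈ T, s y ≠ y := by
    intro y hy
    rcases Finset.mem_union.1 hy with h | h
    · obtain ⟨u, hu, huy⟩ := hUsurj y h
      have hsy : s y = α u := by
        rw [← huy]
        show s (s (α u)) = α u
        rw [hs]
      rw [hsy, ← huy]
      exact fun hbad => hUne u hu hbad.symm
    · obtain ⟨u, hu, rfl⟩ := Finset.mem_image.1 h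
      show s (α u) ≠ α u
      exact hUne u hu
  have hTs : ∀ y ∈ T, s y ∈ T := by
    intro y hy
    rcases Finset.mem_union.1 hy with h | h
    · obtain ⟨u, hu, huy⟩ := hUsurj y h
      have hsy : s y = α u := by
        rw [← huy]
        show s (s (α u)) = α u
        rw [hs]
      rw [hsy]
      exact Finset.mem_union.2 (Or.inr (Finset.mem_image.2 ⟨u, hu, rfl⟩))
    · obtain ⟨u, hu, rfl⟩ := Finset.mem_image.1 h
      show s (α u) ∈ T
      exact Finset.mem_union.2 (Or.inl (hUρ u hu))
  have hTσb : ∀ y ∈ T, σb y ∈ T := by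
    intro y hy
    rw [← hσs y (hTfixfree y hy)]
    exact hTs y hy
  have hxT : x.1 ∈ T := Finset.mem_union.2 (Or.inl ((hUmem _).2 ⟨0, rfl⟩))
  have hall : ∀ y, y ∈ T := by
    intro y
    have hEq : ∀ a b, Relation.EqvGen (fun p q => σb p = q ∨ α p = q) a b →
        (a ∈ T ↔ b ∈ T) := by
      intro a b h
      induction h with
      | rel p q hpq =>
        constructor
        · intro hp
          rcases hpq with h | h
          · rw [← h]; exact hTσb p hp
          · rw [← h]; exact hTα p hp
        · intro hq
          rcases hpq with h | h
          · have : p = σb q := by rw [← h, hσb]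
            rw [this]; exact hTσb q hq
          · have : p = α q := by rw [← h, hα]
            rw [this]; exact hTα q hq
      | refl a => exact Iff.rfl
      | symm a b _ ih => exact ih.symm
      | trans a b c _ _ ih1 ih2 => exact ih1.trans ih2
    exact (hEq x.1 y (hconn x.1 y)).1 hxT
  rcases hend with ⟨z, hz⟩ | ⟨w, hw⟩
  · exact hTfixfree z (hall z) hz
  · apply hw
    rcases Finset.mem_union.1 (hall w) with h | h
    · exact hUS w h
    · obtain ⟨u, hu, rfl⟩ := Finset.mem_image.1 h
      exact hSα u (hUS u hu)

lemma numOrbits_face_le_two (s α : D → D) (hs : ∀ y, s (s y) = y)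
    (hα : ∀ y, α (α y) = y) (hconn : MapConnected s α)
    (S : Finset D) (hSall : ∀ y : D, y ∈ S) (x1 : D) :
    numOrbits (faceSucc s α S) ≤ 2 := by
  classical
  set g := faceSucc s α S with hgdef
  set ρ : D → D := fun y => s (α y) with hρdef
  have hρinj : Function.Injective ρ := by
    intro a b hab
    have h1 := congrArg s hab
    rw [hs, hs] at h1
    have h2 := congrArg α h1
    rwa [hα, hα] at h2
  have hgval : ∀ x : {y : D // y ∈ S}, g x = ⟨ρ x.1, hSall _⟩ := by
    intro x
    rw [hgdef, faceSucc_eq s α S hs (fun y _ => hSall (α y)), dif_pos (hSall _)]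
  have hgiter : ∀ (k : ℕ) (w : {y : D // y ∈ S}), (g^[k] w).1 = ρ^[k] w.1 := by
    intro k
    induction k with
    | zero => intro w; rfl
    | succ n ih =>
      intro w
      rw [Function.iterate_succ_apply', Function.iterate_succ_apply', hgval]
      show ρ ((g^[n] w).1) = ρ (ρ^[n] w.1)
      rw [ih]
  have hginj : Function.Injective g := by
    intro a b hab
    apply Subtype.ext
    apply hρinj
    have := congrArg Subtype.val hab
    rw [hgval, hgval] at this
    exact this
  have hρstep : ∀ w, ρ (α (ρ w)) = α w := by
    intro w
    show s (α (α (s (α w)))) = α w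
    rw [hα, hs]
  have hkey : ∀ (k : ℕ) (v : D), ρ^[k] (α (ρ^[k] v)) = α v := by
    intro k
    induction k with
    | zero => intro v; rfl
    | succ n ih =>
      intro v
      rw [Function.iterate_succ_apply' (f := ρ) (n := n) (x := v),
        Function.iterate_succ_apply (f := ρ), hρstep]
      exact ih v
  -- ambient coverage
  set U : Finset D := Finset.univ.filter (fun y => ∃ k : ℕ, ρ^[k] x1 = y) with hUdef
  have hUmem : ∀ y, y ∈ U ↔ ∃ k : ℕ, ρ^[k] x1 = y := by
    intro y; simp [hUdef]
  have hUρ : ∀ y ∈ U, ρ y ∈ U := by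
    intro y hy
    obtain ⟨k, hk⟩ := (hUmem y).1 hy
    exact (hUmem _).2 ⟨k+1, by rw [Function.iterate_succ_apply', hk]⟩
  have hUsurj : ∀ y ∈ U, ∃ u ∈ U, ρ u = y := by
    have himg : U.image ρ = U := by
      apply Finset.eq_of_subset_of_card_le
      · intro y hy
        obtain ⟨u, hu, rfl⟩ := Finset.mem_image.1 hy
        exact hUρ u hu
      · rw [Finset.card_image_of_injective _ hρinj]
    intro y hy
    rw [← himg] at hy
    obtain ⟨u, hu, huy⟩ := Finset.mem_image.1 hy
    exact ⟨u, hu, huy⟩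
  set T : Finset D := U ∪ U.image α with hTdef
  have hTα : ∀ y ∈ T, α y ∈ T := by
    intro y hy
    rcases Finset.mem_union.1 hy with h | h
    · exact Finset.mem_union.2 (Or.inr (Finset.mem_image.2 ⟨y, h, rfl⟩))
    · obtain ⟨u, hu, rfl⟩ := Finset.mem_image.1 h
      rw [hα]
      exact Finset.mem_union.2 (Or.inl hu)
  have hTs : ∀ y ∈ T, s y ∈ T := by
    intro y hy
    rcases Finset.mem_union.1 hy with h | h
    · obtain ⟨u, hu, huy⟩ := hUsurj y h
      have hsy : s y = α u := by
        rw [← huy]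
        show s (s (α u)) = α u
        rw [hs]
      rw [hsy]
      exact Finset.mem_union.2 (Or.inr (Finset.mem_image.2 ⟨u, hu, rfl⟩))
    · obtain ⟨u, hu, rfl⟩ := Finset.mem_image.1 h
      show s (α u) ∈ T
      exact Finset.mem_union.2 (Or.inl (hUρ u hu))
  have hall : ∀ y, y ∈ T := by
    intro y
    have hEq : ∀ a b, Relation.EqvGen (fun p q => s p = q ∨ α p = q) a b →
        (a ∈ T ↔ b ∈ T) := by
      intro a b h
      induction h with
      | rel p q hpq =>
        constructor
        · intro hp
          rcases hpq with h | h
          · rw [← h]; exact hTs p hp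
          · rw [← h]; exact hTα p hp
        · intro hq
          rcases hpq with h | h
          · have : p = s q := by rw [← h, hs]
            rw [this]; exact hTs q hq
          · have : p = α q := by rw [← h, hα]
            rw [this]; exact hTα q hq
      | refl a => exact Iff.rfl
      | symm a b _ ih => exact ih.symm
      | trans a b c _ _ ih1 ih2 => exact ih1.trans ih2
    exact (hEq x1 y (hconn x1 y)).1 (Finset.mem_union.2 (Or.inl ((hUmem _).2 ⟨0, rfl⟩)))
  apply numOrbits_le_two g ⟨x1, hSall x1⟩ ⟨α x1, hSall (α x1)⟩
  intro y
  rcases Finset.mem_union.1 (hall y.1) with h | h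
  · left
    obtain ⟨k, hk⟩ := (hUmem y.1).1 h
    rw [eqvGen_iff_orbit hginj]
    refine ⟨k, Or.inr (Subtype.ext ?_)⟩
    rw [hgiter]
    exact hk
  · right
    obtain ⟨u, hu, huy⟩ := Finset.mem_image.1 h
    obtain ⟨k, hk⟩ := (hUmem u).1 hu
    rw [eqvGen_iff_orbit hginj]
    refine ⟨k, Or.inl (Subtype.ext ?_)⟩
    rw [hgiter]
    show ρ^[k] y.1 = α x1
    rw [← huy, ← hk]
    exact hkey k x1


end AuxCMC

/-- a single cycle whose edges carry at least two distinct color sets of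
size `d/2` loses faces compared to its unhooking; consequently `δ < d` for such a cycle
(with the scaling `s_C = |C| - d`). -/
theorem cycle_multiple_colors {D : Type*} [Fintype D] [DecidableEq D] {d : ℕ}
    (hd : 2 < d) (σ α : D → D) (col : D → Finset (Fin d))
    (hM : ProperMap σ α col)
    (hcyc : ∀ x, σ (σ x) = x ∧ σ x ≠ x)
    (hhalf : ∀ x, 2 * (col x).card = d)
    (hdistinct : ∃ x y : D, col x ≠ col y) :
    (∀ x0 : D, (∑ c : Fin d, (Fc σ α col c : ℤ)) <
        ∑ c : Fin d, (Fc (unhookSigma σ x0) α col c : ℤ)) ∧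
      deltaMap σ α col (fun C => (C.card : ℤ) - d) < d := by
  classical
  obtain ⟨hσbij, hα2, hαne, hcolα, hconn⟩ := hM
  have hσ2 : ∀ x, σ (σ x) = x := fun x => (hcyc x).1
  have hσne : ∀ x, σ x ≠ x := fun x => (hcyc x).2
  obtain ⟨xd, yd, hxyd⟩ := hdistinct
  have hSα : ∀ (c : Fin d), ∀ y ∈ colorDarts col c, α y ∈ colorDarts col c := by
    intro c y hy
    simp only [colorDarts, Finset.mem_filter, Finset.mem_univ, true_and] at hy ⊢
    rw [hcolα]
    exact hy
  have hFcdef : ∀ (s0 : D → D) (c : Fin d), Fc s0 α col c =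
      numOrbits (faceSucc s0 α (colorDarts col c)) + isolatedVerts s0 (colorDarts col c) :=
    fun _ _ => rfl
  -- M per color
  have hMc : ∀ c : Fin d, (¬ ∀ z : D, c ∈ col z) →
      2 * Fc σ α col c + (colorDarts col c).card = Fintype.card D := by
    intro c hnf
    push_neg at hnf
    obtain ⟨w, hw⟩ := hnf
    have hmeet := meet_lemma σ α σ hσ2 hα2 hσ2 (colorDarts col c) (hSα c)
      (fun y _ => rfl) hconn (Or.inr ⟨w, by simp [colorDarts, hw]⟩)
    have h2 := two_mul_fc σ α hσ2 hα2 hαne (colorDarts col c) (hSα c) hmeet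
    have hfix0 : (Finset.univ.filter fun y : D => σ y = y).card = 0 := by
      rw [Finset.card_eq_zero, Finset.filter_eq_empty_iff]
      intro y _
      exact hσne y
    rw [hfix0] at h2
    have hle : (colorDarts col c).card ≤ Fintype.card D := by
      rw [← Finset.card_univ]
      exact Finset.card_le_card (Finset.subset_univ _)
    rw [hFcdef]
    omega
  have hMfull1 : ∀ c : Fin d, (∀ z : D, c ∈ col z) → Fc σ α col c ≤ 2 := by
    intro c hfull
    have hSall : ∀ y : D, y ∈ colorDarts col c := by
      intro y
      simp [colorDarts, hfull y]
    have hiso0 : isolatedVerts σ (colorDarts col c) = 0 := by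
      haveI : IsEmpty {y : D // ∀ k : ℕ, σ^[k] y ∉ colorDarts col c} :=
        ⟨fun w => w.2 0 (hSall w.1)⟩
      exact numOrbits_empty _
    rw [hFcdef, hiso0, Nat.add_zero]
    exact numOrbits_face_le_two σ α hσ2 hα2 hconn _ hSall xd
  -- t bound
  have ht : 2 * (Finset.univ.filter fun c : Fin d => ∀ z : D, c ∈ col z).card + 2 ≤ d := by
    have hsub : (Finset.univ.filter fun c : Fin d => ∀ z : D, c ∈ col z) ⊆ col xd ∩ col yd := by
      intro c hc
      have hc2 := (Finset.mem_filter.1 hc).2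
      exact Finset.mem_inter.2 ⟨hc2 xd, hc2 yd⟩
    have hcards : (col xd).card = (col yd).card := by
      have h1 := hhalf xd
      have h2 := hhalf yd
      omega
    have hlt : (col xd ∩ col yd).card < (col xd).card := by
      rcases lt_or_eq_of_le (Finset.card_le_card
        (Finset.inter_subset_left (s₂ := col yd))) with h | h
      · exact h
      · exfalso
        have h1 : col xd ∩ col yd = col xd :=
          Finset.eq_of_subset_of_card_le Finset.inter_subset_left (le_of_eq h.symm)
        have h2 : col xd ⊆ col yd := by
          intro a ha
          have : a ∈ col xd ∩ col yd := by rw [h1]; exact ha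
          exact (Finset.mem_inter.1 this).2
        exact hxyd (Finset.eq_of_subset_of_card_le h2 (le_of_eq hcards.symm))
    have hts := Finset.card_le_card hsub
    have hhx := hhalf xd
    have hint := Finset.card_le_card (Finset.inter_subset_left (s₁ := col xd) (s₂ := col yd))
    omega
  -- M sum bound
  have hsumM : 2 * (∑ c : Fin d, Fc σ α col c) + (∑ c : Fin d, (colorDarts col c).card)
      ≤ d * Fintype.card D +
        4 * (Finset.univ.filter fun c : Fin d => ∀ z : D, c ∈ col z).card := by
    have hper : ∀ c : Fin d, 2 * Fc σ α col c + (colorDarts col c).card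
        ≤ Fintype.card D + (if (∀ z : D, c ∈ col z) then 4 else 0) := by
      intro c
      by_cases hfull : ∀ z : D, c ∈ col z
      · rw [if_pos hfull]
        have h1 := hMfull1 c hfull
        have h2 : (colorDarts col c).card ≤ Fintype.card D := by
          rw [← Finset.card_univ]
          exact Finset.card_le_card (Finset.subset_univ _)
        omega
      · rw [if_neg hfull]
        have := hMc c hfull
        omega
    calc 2 * (∑ c : Fin d, Fc σ α col c) + ∑ c : Fin d, (colorDarts col c).card
        = ∑ c : Fin d, (2 * Fc σ α col c + (colorDarts col c).card) := by
          rw [Finset.sum_add_distrib, Finset.mul_sum]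
      _ ≤ ∑ c : Fin d, (Fintype.card D + (if (∀ z : D, c ∈ col z) then 4 else 0)) :=
          Finset.sum_le_sum (fun c _ => hper c)
      _ = d * Fintype.card D +
            4 * (Finset.univ.filter fun c : Fin d => ∀ z : D, c ∈ col z).card := by
          rw [Finset.sum_add_distrib, Finset.sum_const, Finset.card_univ, Fintype.card_fin,
            smul_eq_mul]
          congr 1
          rw [← Finset.sum_filter, Finset.sum_const, smul_eq_mul, mul_comm]
  -- W identities
  have hW : (∑ c : Fin d, (colorDarts col c).card) = ∑ x : D, (col x).card := by
    calc ∑ c : Fin d, (colorDarts col c).card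
        = ∑ c : Fin d, ∑ x : D, (if c ∈ col x then 1 else 0) := by
          apply Finset.sum_congr rfl
          intro c _
          rw [colorDarts, Finset.card_filter]
      _ = ∑ x : D, ∑ c : Fin d, (if c ∈ col x then 1 else 0) := Finset.sum_comm
      _ = ∑ x : D, (col x).card := by
          apply Finset.sum_congr rfl
          intro x _
          rw [← Finset.card_filter]
          congr 1
          exact Finset.filter_univ_mem (col x)
  have hW2 : 2 * (∑ x : D, (col x).card) = d * Fintype.card D := by
    rw [Finset.mul_sum]
    calc ∑ x : D, 2 * (col x).card = ∑ _x : D, d := Finset.sum_congr rfl (fun x _ => hhalf x)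
      _ = d * Fintype.card D := by
          rw [Finset.sum_const, Finset.card_univ, smul_eq_mul, mul_comm]
  constructor
  · -- part 1
    intro x0
    set σ' := unhookSigma σ x0 with hσ'def
    have hσ'x0 : σ' x0 = x0 := by simp [hσ'def, unhookSigma]
    have hσ'σx0 : σ' (σ x0) = σ x0 := by
      simp only [hσ'def, unhookSigma]
      rw [if_neg (hσne x0), if_pos (hσ2 x0)]
    have hσ'other : ∀ y, y ≠ x0 → y ≠ σ x0 → σ' y = σ y := by
      intro y h1 h2
      simp only [hσ'def, unhookSigma]
      rw [if_neg h1, if_neg]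
      intro hy
      apply h2
      rw [← hy, hσ2]
    have hσ'2 : ∀ y, σ' (σ' y) = y := by
      intro y
      by_cases h1 : y = x0
      · rw [h1, hσ'x0, hσ'x0]
      by_cases h2 : y = σ x0
      · rw [h2, hσ'σx0, hσ'σx0]
      · rw [hσ'other y h1 h2]
        have hs1 : σ y ≠ x0 := by
          intro hc
          apply h2
          rw [← hc, hσ2]
        have hs2 : σ y ≠ σ x0 := by
          intro hc
          apply h1
          have := congrArg σ hc
          rwa [hσ2, hσ2] at this
        rw [hσ'other (σ y) hs1 hs2, hσ2]
    have hσ's : ∀ y, σ' y ≠ y → σ' y = σ y := by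
      intro y hy
      by_cases h1 : y = x0
      · exfalso
        apply hy
        rw [h1, hσ'x0]
      by_cases h2 : y = σ x0
      · exfalso
        apply hy
        rw [h2, hσ'σx0]
      · exact hσ'other y h1 h2
    have hfix2 : (Finset.univ.filter fun y : D => σ' y = y).card = 2 := by
      have hset : (Finset.univ.filter fun y : D => σ' y = y) = {x0, σ x0} := by
        ext y
        simp only [Finset.mem_filter, Finset.mem_univ, true_and, Finset.mem_insert,
          Finset.mem_singleton]
        constructor
        · intro hy
          by_cases h1 : y = x0
          · exact Or.inl h1
          by_cases h2 : y = σ x0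
          · exact Or.inr h2
          · exfalso
            rw [hσ'other y h1 h2] at hy
            exact hσne y hy
        · rintro (rfl | rfl)
          exacts [hσ'x0, hσ'σx0]
      rw [hset, Finset.card_insert_of_notMem (by
        simp only [Finset.mem_singleton]
        exact fun h => hσne x0 h.symm), Finset.card_singleton]
    have hc' : ∀ c : Fin d,
        2 * Fc σ' α col c + (colorDarts col c).card = Fintype.card D + 2 := by
      intro c
      have hmeet := meet_lemma σ' α σ hσ'2 hα2 hσ2 (colorDarts col c) (hSα c)
        hσ's hconn (Or.inl ⟨x0, hσ'x0⟩)
      have h2 := two_mul_fc σ' α hσ'2 hα2 hαne (colorDarts col c) (hSα c) hmeet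
      rw [hfix2] at h2
      have hle : (colorDarts col c).card ≤ Fintype.card D := by
        rw [← Finset.card_univ]
        exact Finset.card_le_card (Finset.subset_univ _)
      rw [hFcdef]
      omega
    have hsum' : 2 * (∑ c : Fin d, Fc σ' α col c) + (∑ c : Fin d, (colorDarts col c).card)
        = d * Fintype.card D + 2 * d := by
      have hsc := Finset.sum_congr rfl (fun c (_ : c ∈ Finset.univ) => hc' c)
      rw [Finset.sum_add_distrib, ← Finset.mul_sum] at hsc
      have hrhs : (∑ _c : Fin d, (Fintype.card D + 2)) = d * Fintype.card D + 2 * d := by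
        rw [Finset.sum_const, Finset.card_univ, Fintype.card_fin, smul_eq_mul]
        ring
      omega
    have hlt : (∑ c : Fin d, Fc σ α col c) < ∑ c : Fin d, Fc σ' α col c := by
      omega
    rw [show (∑ c : Fin d, (Fc σ α col c : ℤ)) = ((∑ c : Fin d, Fc σ α col c : ℕ) : ℤ) by
        push_cast; rfl,
      show (∑ c : Fin d, (Fc σ' α col c : ℤ)) = ((∑ c : Fin d, Fc σ' α col c : ℕ) : ℤ) by
        push_cast; rfl]
    exact_mod_cast hlt
  · -- part 2: delta
    have hKey : 2 * (∑ C : Finset (Fin d), C.card * bCnt col C) = ∑ x : D, (col x).card := by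
      have hper : ∀ C : Finset (Fin d), 2 * (C.card * bCnt col C)
          = C.card * (Finset.univ.filter fun x : D => col x = C).card := by
        intro C
        have heven : Even ((Finset.univ.filter fun x : D => col x = C).card) := by
          have h := even_card_subtype α hα2 hαne (fun x => col x = C)
            (fun y hy => by show col (α y) = C; rw [hcolα]; exact hy)
          rwa [Nat.card_eq_fintype_card, Fintype.card_subtype] at h
        obtain ⟨k, hk⟩ := heven
        have hb : bCnt col C = (Finset.univ.filter fun x : D => col x = C).card / 2 := rfl
        rw [hb, hk]
        rw [show (k + k) / 2 = k by omega]
        ring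
      calc 2 * ∑ C : Finset (Fin d), C.card * bCnt col C
          = ∑ C : Finset (Fin d), 2 * (C.card * bCnt col C) := by rw [Finset.mul_sum]
        _ = ∑ C : Finset (Fin d), C.card * (Finset.univ.filter fun x : D => col x = C).card :=
            Finset.sum_congr rfl (fun C _ => hper C)
        _ = ∑ C : Finset (Fin d), ∑ x ∈ Finset.univ.filter (fun x : D => col x = C),
              (col x).card := by
            apply Finset.sum_congr rfl
            intro C _
            have hcong : ∀ x ∈ Finset.univ.filter (fun x : D => col x = C),
                (col x).card = C.card := fun x hx => by rw [(Finset.mem_filter.1 hx).2]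
            rw [Finset.sum_congr rfl hcong, Finset.sum_const, smul_eq_mul, mul_comm]
        _ = ∑ x : D, (col x).card := Finset.sum_fiberwise _ _ _
    have hneg : ∑ C : Finset (Fin d), ((C.card : ℤ) - d) * (bCnt col C : ℤ)
        = - ∑ C : Finset (Fin d), ((C.card : ℤ) * (bCnt col C : ℤ)) := by
      rw [← Finset.sum_neg_distrib]
      apply Finset.sum_congr rfl
      intro C _
      rcases eq_or_ne ((Finset.univ.filter fun x : D => col x = C).card) 0 with h0 | h0
      · have hb : bCnt col C = 0 := by
          have : bCnt col C = (Finset.univ.filter fun x : D => col x = C).card / 2 := rfl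
          omega
        rw [hb]
        push_cast
        ring
      · obtain ⟨x, hx⟩ := Finset.card_pos.1 (Nat.pos_of_ne_zero h0)
        have hcx : col x = C := (Finset.mem_filter.1 hx).2
        have hd2 : 2 * C.card = d := by rw [← hcx]; exact hhalf x
        have hdz : (d : ℤ) = 2 * (C.card : ℤ) := by exact_mod_cast hd2.symm
        rw [hdz]
        ring
    show (∑ c : Fin d, (Fc σ α col c : ℤ)) +
        ∑ C : Finset (Fin d), ((C.card : ℤ) - d) * (bCnt col C : ℤ) < d
    rw [hneg]
    have hc1 : (∑ c : Fin d, (Fc σ α col c : ℤ)) = ((∑ c : Fin d, Fc σ α col c : ℕ) : ℤ) := by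
      push_cast
      rfl
    have hc2 : (∑ C : Finset (Fin d), ((C.card : ℤ) * (bCnt col C : ℤ)))
        = ((∑ C : Finset (Fin d), C.card * bCnt col C : ℕ) : ℤ) := by
      push_cast
      rfl
    rw [hc1, hc2]
    omega
end

section
/- There exists, for every b ≥ 1, a connected Feynman graph G with b copies of a GM bubble B (vertices paired by color-0 edges) whose total number of bicolored {0,c}-cycles equals (d(V−2)/2 − Σ_C |C| b_C)·b + d, where V is the number of vertices of B and b_C the number of C-bidipole insertions in B. -/
open Equiv

/-- A bubble with `2n` vertices (`n` white, `n` black): for each color `c ∈ {1,…,d}` the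
perfect matching of color `c` is a bijection from white to black vertices. -/
abbrev Bubble (d n : ℕ) := Fin d → Equiv.Perm (Fin n)

/-- Extension of a white-to-black matching to one more white and one more black vertex
(both indexed by `0`, old vertices shifted by `Fin.succ`), the two new vertices matched. -/
def extPerm {n : ℕ} (f : Equiv.Perm (Fin n)) : Equiv.Perm (Fin (n + 1)) :=
  (finSuccEquiv n).symm.permCongr f.optionCongr

/-- `C`-bidipole insertion at the white vertex `v`: `v` is replaced by the three vertices
`v`, `v̄`, `w`, where the new black vertex `v̄` is joined to the new white vertex `w` by the
colors of `C` and to `v` by the complementary colors. -/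
def insertWhite {d n : ℕ} (B : Bubble d n) (C : Finset (Fin d)) (v : Fin n) :
    Bubble d (n + 1) :=
  fun c => if c ∈ C then extPerm (B c) else extPerm (B c) * Equiv.swap 0 v.succ

/-- `C`-bidipole insertion at a black vertex (the color-reversed move). -/
def insertBlack {d n : ℕ} (B : Bubble d n) (C : Finset (Fin d)) (b : Fin n) :
    Bubble d (n + 1) :=
  fun c => if c ∈ C then extPerm (B c) else Equiv.swap 0 b.succ * extPerm (B c)

/-- Admissible color sets: nonempty, `|C| ≤ d/2`, and containing the color `1`
(i.e. `(0 : Fin d)`) whenever `|C| = d/2`. -/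
def AdmSet (d : ℕ) (C : Finset (Fin d)) : Prop :=
  C.Nonempty ∧ 2 * C.card ≤ d ∧ (2 * C.card = d → ∃ h : 0 < d, (⟨0, h⟩ : Fin d) ∈ C)

/-- `Builds d n B s` : the bubble `B` (with `2n` vertices) is obtained from the 2-vertex
bubble by a sequence of bidipole insertions whose multiset of (admissible) color sets
is `s`.  GM bubbles are exactly the bubbles built this way. -/
inductive Builds (d : ℕ) : (n : ℕ) → Bubble d n → Multiset (Finset (Fin d)) → Prop
  | base : Builds d 1 (fun _ => 1) 0
  | stepW {n : ℕ} {B : Bubble d n} {s : Multiset (Finset (Fin d))}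
      (C : Finset (Fin d)) (v : Fin n) (hC : AdmSet d C) (h : Builds d n B s) :
      Builds d (n + 1) (insertWhite B C v) (C ::ₘ s)
  | stepB {n : ℕ} {B : Bubble d n} {s : Multiset (Finset (Fin d))}
      (C : Finset (Fin d)) (b : Fin n) (hC : AdmSet d C) (h : Builds d n B s) :
      Builds d (n + 1) (insertBlack B C b) (C ::ₘ s)

/-- Total number of bicolored `{0,c}`-cycles of the graph obtained by joining each white
vertex `v` to the black vertex `π v` by an edge of color `0`: for each color `c`, the
cycles are the orbits of `v ↦ (B c)⁻¹ (π v)` on white vertices. -/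
noncomputable def pairingCycles {d n : ℕ} (B : Bubble d n) (π : Equiv.Perm (Fin n)) : ℕ :=
  ∑ c : Fin d, numOrbits fun v => (B c).symm (π v)

/-- Total number of bicolored `{0,c}`-cycles of the Feynman graph built from `b` copies of
the bubble `B` and the color-0 matching `π₀` (black vertex `(i,v)` joined to white
vertex `π₀ (i,v)`). -/
noncomputable def feynmanCycles {d n b : ℕ} (B : Bubble d n)
    (π₀ : Equiv.Perm (Fin b × Fin n)) : ℕ :=
  ∑ c : Fin d, numOrbits fun w : Fin b × Fin n => π₀ (w.1, B c w.2)

/-- Connectivity of the Feynman graph made of `b` copies of `B` and the matching `π₀`. -/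
def FeynmanConnected {d n b : ℕ} (B : Bubble d n)
    (π₀ : Equiv.Perm (Fin b × Fin n)) : Prop :=
  ∀ w w' : Fin b × Fin n,
    Relation.EqvGen (fun a a' => ∃ c : Fin d, π₀ (a.1, B c a.2) = a') w w'


open Equiv.Perm Relation

section OrbitTheory

variable {α β : Type*}

lemma eqvGen_pow [Finite α] (f : Perm α) (x : α) : ∀ k : ℕ,
    Relation.EqvGen (fun x y => f x = y) x ((f ^ k) x) := by
  intro k
  induction k with
  | zero => simpa using Relation.EqvGen.refl x
  | succ k ih =>
    refine Relation.EqvGen.trans _ _ _ ih (Relation.EqvGen.rel _ _ ?_)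
    rw [pow_succ', Perm.mul_apply]

lemma eqvGen_iff_sameCycle [Finite α] (f : Perm α) (x y : α) :
    Relation.EqvGen (fun x y => f x = y) x y ↔ f.SameCycle x y := by
  constructor
  · intro h
    induction h with
    | rel a b hab => exact ⟨1, by simpa using hab⟩
    | refl a => exact Equiv.Perm.SameCycle.refl _ _
    | symm a b _ ih => exact ih.symm
    | trans a b c _ _ ih1 ih2 => exact ih1.trans ih2
  · intro h
    obtain ⟨k, _, rfl⟩ := h.exists_pow_eq'
    exact eqvGen_pow f x k

/-- Number of cycles (orbits, including fixed points) of a permutation. -/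
noncomputable def cyc [Finite α] (f : Perm α) : ℕ :=
  Nat.card (Quotient (Equiv.Perm.SameCycle.setoid f))

lemma numOrbits_perm [Finite α] (f : Perm α) : numOrbits ⇑f = cyc f := by
  unfold numOrbits cyc
  congr 1
  congr 1
  exact Setoid.ext fun x y => eqvGen_iff_sameCycle f x y

lemma sameCycle_iff_exists_pow [Finite α] (f : Perm α) (x y : α) :
    f.SameCycle x y ↔ ∃ k : ℕ, (f ^ k) x = y := by
  constructor
  · intro h
    obtain ⟨k, _, rfl⟩ := h.exists_pow_eq'
    exact ⟨k, rfl⟩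
  · rintro ⟨k, rfl⟩
    exact ⟨k, by simp⟩

end OrbitTheory

section CycLemmas

variable {α β : Type*} [Finite α]

lemma cyc_inv (f : Perm α) : cyc f⁻¹ = cyc f := by
  unfold cyc
  congr 2
  exact Setoid.ext fun x y => Equiv.Perm.sameCycle_inv

lemma cyc_conj (f g : Perm α) : cyc (g * f * g⁻¹) = cyc f := by
  unfold cyc
  refine (Nat.card_congr ?_).symm
  refine Quotient.congr g fun a b => ?_
  show f.SameCycle a b ↔ (g * f * g⁻¹).SameCycle (g a) (g b)
  simp [Equiv.Perm.sameCycle_conj]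

lemma extPerm_apply_zero {n : ℕ} (f : Perm (Fin n)) : extPerm f 0 = 0 := by
  simp [extPerm]

lemma extPerm_apply_succ {n : ℕ} (f : Perm (Fin n)) (i : Fin n) :
    extPerm f i.succ = (f i).succ := by
  simp [extPerm]

lemma extPerm_mul {n : ℕ} (f g : Perm (Fin n)) :
    extPerm (f * g) = extPerm f * extPerm g := by
  ext x
  induction x using Fin.cases with
  | zero => simp [extPerm_apply_zero]
  | succ i => simp [extPerm_apply_succ]

lemma extPerm_pow {n : ℕ} (f : Perm (Fin n)) (k : ℕ) :
    (extPerm f) ^ k = extPerm (f ^ k) := by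
  induction k with
  | zero =>
    ext x
    induction x using Fin.cases with
    | zero => simp [extPerm_apply_zero]
    | succ i => simp [extPerm_apply_succ]
  | succ k ih => rw [pow_succ, pow_succ, ih, extPerm_mul]

lemma sc_ext_zero {n : ℕ} (f : Perm (Fin n)) (x : Fin (n + 1)) :
    (extPerm f).SameCycle 0 x ↔ x = 0 := by
  constructor
  · intro h
    obtain ⟨k, rfl⟩ := (sameCycle_iff_exists_pow _ _ _).1 h
    rw [extPerm_pow, extPerm_apply_zero]
  · rintro rfl; exact Equiv.Perm.SameCycle.rfl

lemma sc_ext_succ {n : ℕ} (f : Perm (Fin n)) (i j : Fin n) :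
    (extPerm f).SameCycle i.succ j.succ ↔ f.SameCycle i j := by
  rw [sameCycle_iff_exists_pow, sameCycle_iff_exists_pow]
  constructor
  · rintro ⟨k, hk⟩
    rw [extPerm_pow, extPerm_apply_succ] at hk
    exact ⟨k, Fin.succ_injective _ hk⟩
  · rintro ⟨k, hk⟩
    exact ⟨k, by rw [extPerm_pow, extPerm_apply_succ, hk]⟩

lemma cyc_extPerm {n : ℕ} (f : Perm (Fin n)) : cyc (extPerm f) = cyc f + 1 := by
  classical
  unfold cyc
  rw [← Finite.card_option]
  refine Nat.card_congr ?_
  let sE := Equiv.Perm.SameCycle.setoid (extPerm f)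
  let sf := Equiv.Perm.SameCycle.setoid f
  have wdF : ∀ a b : Fin (n + 1), sE.r a b →
      (Fin.cases none (fun i => some (Quotient.mk sf i)) a :
        Option (Quotient sf)) = Fin.cases none (fun i => some (Quotient.mk sf i)) b := by
    intro a b hab
    induction a using Fin.cases with
    | zero =>
      have : b = 0 := (sc_ext_zero f b).1 hab
      subst this; rfl
    | succ i =>
      induction b using Fin.cases with
      | zero => exact absurd ((sc_ext_zero f i.succ).1 (Setoid.symm hab)) (Fin.succ_ne_zero i)
      | succ j => simpa using Quotient.sound ((sc_ext_succ f i j).1 hab)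
  have wdG : ∀ i j : Fin n, sf.r i j →
      (Quotient.mk sE i.succ) = Quotient.mk sE j.succ := by
    intro i j hij
    exact Quotient.sound ((sc_ext_succ f i j).2 hij)
  let F : Quotient sE → Option (Quotient sf) :=
    Quotient.lift (fun x => Fin.cases none (fun i => some (Quotient.mk sf i)) x) wdF
  let G : Option (Quotient sf) → Quotient sE := fun o =>
    o.elim (Quotient.mk sE 0) (Quotient.lift (fun i : Fin n => Quotient.mk sE i.succ) wdG)
  refine ⟨F, G, ?_, ?_⟩
  · refine Quotient.ind fun x => ?_
    induction x using Fin.cases with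
    | zero => rfl
    | succ i => rfl
  · rintro (_ | q)
    · rfl
    · obtain ⟨i, rfl⟩ := Quotient.exists_rep q
      show F (Quotient.mk sE i.succ) = some (Quotient.mk sf i)
      show (Fin.cases none (fun i => some (Quotient.mk sf i)) i.succ :
        Option (Quotient sf)) = some (Quotient.mk sf i)
      rw [Fin.cases_succ]

end CycLemmas

section Merge

variable {α : Type*} [Finite α] [DecidableEq α]

lemma sc_apply (g : Perm α) (x : α) : g.SameCycle x (g x) := ⟨1, by simp⟩

/-- Multiplying by a transposition joining two different cycles puts `a` and `b`
in the same cycle. -/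
lemma sc_swap_mul_self {f : Perm α} {a b : α} (hab : ¬ f.SameCycle a b) :
    (Equiv.swap a b * f).SameCycle a b := by
  set g := Equiv.swap a b * f with hg
  have hne : a ≠ b := fun h => hab (h ▸ Equiv.Perm.SameCycle.rfl)
  have key : ∀ m : ℕ, g.SameCycle a ((f ^ m) a) := by
    intro m
    induction m with
    | zero => exact ⟨0, by simp⟩
    | succ m ih =>
      have hm1 : (f ^ (m + 1)) a = f ((f ^ m) a) := by rw [pow_succ', Perm.mul_apply]
      by_cases h1 : (f ^ (m + 1)) a = a
      · rw [h1]
      · by_cases h2 : (f ^ (m + 1)) a = b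
        · exact absurd ⟨(m + 1 : ℕ), by rw [zpow_natCast]; exact h2⟩ hab
        · have hstep : g ((f ^ m) a) = (f ^ (m + 1)) a := by
            rw [hg, Perm.mul_apply, ← hm1, Equiv.swap_apply_of_ne_of_ne h1 h2]
          exact ih.trans (hstep ▸ sc_apply g ((f ^ m) a))
  have horder : f ^ (orderOf f - 1) = f⁻¹ := by
    rw [eq_inv_iff_mul_eq_one, ← pow_succ, Nat.sub_add_cancel (orderOf_pos f),
      pow_orderOf_eq_one]
  have h1 : g.SameCycle a (f⁻¹ a) := horder ▸ key (orderOf f - 1)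
  have h2 : g (f⁻¹ a) = b := by
    rw [hg, Perm.mul_apply, Perm.inv_def, Equiv.apply_symm_apply, Equiv.swap_apply_left]
  exact h1.trans (h2 ▸ sc_apply g (f⁻¹ a))

lemma sc_swap_mul_step {f : Perm α} {a b : α} (hab : ¬ f.SameCycle a b) (x : α) :
    (Equiv.swap a b * f).SameCycle x (f x) := by
  set g := Equiv.swap a b * f with hg
  by_cases h1 : f x = a
  · have : g x = b := by rw [hg, Perm.mul_apply, h1, Equiv.swap_apply_left]
    have hx : g.SameCycle x b := this ▸ sc_apply g x
    exact h1 ▸ (hx.trans (sc_swap_mul_self hab).symm)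
  · by_cases h2 : f x = b
    · have : g x = a := by rw [hg, Perm.mul_apply, h2, Equiv.swap_apply_right]
      have hx : g.SameCycle x a := this ▸ sc_apply g x
      exact h2 ▸ (hx.trans (sc_swap_mul_self hab))
    · have : g x = f x := by rw [hg, Perm.mul_apply, Equiv.swap_apply_of_ne_of_ne h1 h2]
      exact this ▸ sc_apply g x

/-- Merging preserves the same-cycle relation. -/
lemma sc_swap_mul_mono {f : Perm α} {a b : α} (hab : ¬ f.SameCycle a b) {x y : α}
    (h : f.SameCycle x y) : (Equiv.swap a b * f).SameCycle x y := by
  obtain ⟨k, rfl⟩ := (sameCycle_iff_exists_pow f x y).1 h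
  clear h
  induction k with
  | zero => exact ⟨0, by simp⟩
  | succ k ih =>
    have hm1 : (f ^ (k + 1)) x = f ((f ^ k) x) := by rw [pow_succ', Perm.mul_apply]
    exact hm1 ▸ (ih.trans (sc_swap_mul_step hab ((f ^ k) x)))

/-- Points in the merged cycle of `swap a b * f` were on the cycle of `a` or of `b`. -/
lemma sc_swap_mul_orbit_a {f : Perm α} {a b : α} {x : α}
    (h : (Equiv.swap a b * f).SameCycle a x) :
    f.SameCycle a x ∨ f.SameCycle b x := by
  set g := Equiv.swap a b * f with hg
  obtain ⟨k, rfl⟩ := (sameCycle_iff_exists_pow g a x).1 h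
  clear h
  induction k with
  | zero => left; exact ⟨0, by simp⟩
  | succ k ih =>
    have hm1 : (g ^ (k + 1)) a = g ((g ^ k) a) := by rw [pow_succ', Perm.mul_apply]
    set z := (g ^ k) a with hz
    by_cases h1 : f z = a
    · have : g z = b := by rw [hg, Perm.mul_apply, h1, Equiv.swap_apply_left]
      rw [hm1, this]
      right; exact Equiv.Perm.SameCycle.rfl
    · by_cases h2 : f z = b
      · have : g z = a := by rw [hg, Perm.mul_apply, h2, Equiv.swap_apply_right]
        rw [hm1, this]
        left; exact Equiv.Perm.SameCycle.rfl
      · have : g z = f z := by rw [hg, Perm.mul_apply, Equiv.swap_apply_of_ne_of_ne h1 h2]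
        rw [hm1, this]
        rcases ih with ih | ih
        · left; exact ih.trans (sc_apply f z)
        · right; exact ih.trans (sc_apply f z)

/-- Outside the merged cycle, `swap a b * f` has the same cycles as `f`. -/
lemma sc_swap_mul_cases {f : Perm α} {a b : α} (hab : ¬ f.SameCycle a b) {x y : α}
    (h : (Equiv.swap a b * f).SameCycle x y) :
    f.SameCycle x y ∨ (Equiv.swap a b * f).SameCycle x a := by
  set g := Equiv.swap a b * f with hg
  obtain ⟨k, rfl⟩ := (sameCycle_iff_exists_pow g x y).1 h
  clear h
  induction k with
  | zero => left; exact ⟨0, by simp⟩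
  | succ k ih =>
    have hm1 : (g ^ (k + 1)) x = g ((g ^ k) x) := by rw [pow_succ', Perm.mul_apply]
    set z := (g ^ k) x with hz
    have hxz : g.SameCycle x z := ⟨(k : ℕ), by simp [hz]⟩
    by_cases h1 : f z = a
    · right
      have hgz : g z = b := by rw [hg, Perm.mul_apply, h1, Equiv.swap_apply_left]
      have hzb : g.SameCycle x b := hxz.trans (hgz ▸ sc_apply g z)
      exact hzb.trans (sc_swap_mul_self hab).symm
    · by_cases h2 : f z = b
      · right
        have hgz : g z = a := by rw [hg, Perm.mul_apply, h2, Equiv.swap_apply_right]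
        exact hxz.trans (hgz ▸ sc_apply g z)
      · have hgz : g z = f z := by
          rw [hg, Perm.mul_apply, Equiv.swap_apply_of_ne_of_ne h1 h2]
        rw [hm1, hgz]
        rcases ih with ih | ih
        · left; exact ih.trans (sc_apply f z)
        · right; exact ih

end Merge

section MergeCount

variable {α : Type*} [Finite α] [DecidableEq α]

/-- Merging two distinct cycles decreases the cycle count by one. -/
lemma cyc_swap_mul {f : Perm α} {a b : α} (hab : ¬ f.SameCycle a b) :
    cyc (Equiv.swap a b * f) + 1 = cyc f := by
  classical
  set g := Equiv.swap a b * f with hg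
  let sf := Equiv.Perm.SameCycle.setoid f
  let sg := Equiv.Perm.SameCycle.setoid g
  have wdPhi : ∀ x y : α, sf.r x y → (Quotient.mk sg x) = Quotient.mk sg y :=
    fun x y hxy => Quotient.sound (sc_swap_mul_mono hab hxy)
  let Phi : Quotient sf → Quotient sg := Quotient.lift (fun x => Quotient.mk sg x) wdPhi
  have wdTheta : ∀ x y : α, sg.r x y →
      (if g.SameCycle x a then Quotient.mk sf a else Quotient.mk sf x) =
      (if g.SameCycle y a then Quotient.mk sf a else Quotient.mk sf y) := by
    intro x y hxy
    have hxy' : g.SameCycle x y := hxy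
    by_cases hx : g.SameCycle x a
    · have hy : g.SameCycle y a := hxy'.symm.trans hx
      rw [if_pos hx, if_pos hy]
    · have hy : ¬ g.SameCycle y a := fun hy => hx (hxy'.trans hy)
      rw [if_neg hx, if_neg hy]
      rcases sc_swap_mul_cases hab hxy' with h | h
      · exact Quotient.sound h
      · exact absurd h hx
  let Theta : Quotient sg → Quotient sf :=
    Quotient.lift (fun x => if g.SameCycle x a then Quotient.mk sf a else Quotient.mk sf x)
      wdTheta
  have key : cyc f = cyc g + 1 := by
    unfold cyc
    rw [← Finite.card_option]
    refine Nat.card_congr ⟨fun q => if q = Quotient.mk sf b then none else some (Phi q),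
      fun o => o.elim (Quotient.mk sf b) Theta, ?_, ?_⟩
    · refine Quotient.ind fun x => ?_
      by_cases hq : (Quotient.mk sf x) = Quotient.mk sf b
      · show (if Quotient.mk sf x = Quotient.mk sf b then none
          else some (Phi (Quotient.mk sf x))).elim (Quotient.mk sf b) Theta = Quotient.mk sf x
        rw [if_pos hq]
        exact hq.symm
      · show (if Quotient.mk sf x = Quotient.mk sf b then none
          else some (Phi (Quotient.mk sf x))).elim (Quotient.mk sf b) Theta = Quotient.mk sf x
        rw [if_neg hq]
        show Theta (Quotient.mk sg x) = Quotient.mk sf x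
        show (if g.SameCycle x a then Quotient.mk sf a else Quotient.mk sf x) = Quotient.mk sf x
        by_cases hx : g.SameCycle x a
        · rw [if_pos hx]
          rcases sc_swap_mul_orbit_a hx.symm with h | h
          · exact Quotient.sound h
          · exact absurd (Quotient.sound h.symm : (Quotient.mk sf x) = Quotient.mk sf b) hq
        · rw [if_neg hx]
    · rintro (_ | q)
      · simp
      · simp only [Option.elim]
        obtain ⟨x, rfl⟩ := Quotient.exists_rep q
        show (if (Theta (Quotient.mk sg x)) = Quotient.mk sf b then none
          else some (Phi (Theta (Quotient.mk sg x)))) = some (Quotient.mk sg x)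
        show (if (if g.SameCycle x a then Quotient.mk sf a else Quotient.mk sf x) =
            Quotient.mk sf b then none
          else some (Phi (if g.SameCycle x a then Quotient.mk sf a else Quotient.mk sf x))) =
          some (Quotient.mk sg x)
        by_cases hx : g.SameCycle x a
        · rw [if_pos hx]
          have hne : (Quotient.mk sf a) ≠ Quotient.mk sf b := fun h => hab (Quotient.exact h)
          rw [if_neg hne]
          exact congrArg some (Quotient.sound hx.symm)
        · rw [if_neg hx]
          have hne : (Quotient.mk sf x) ≠ Quotient.mk sf b := by
            intro h
            have hfx : f.SameCycle x b := Quotient.exact h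
            exact hx ((sc_swap_mul_mono hab hfx).trans (sc_swap_mul_self hab).symm)
          rw [if_neg hne]
          exact rfl
  omega

end MergeCount

section BlockDiag

variable {β : Type*} {n : ℕ}

/-- `T ↦ 1 ×ₑ T` as a monoid hom of permutation groups. -/
def blockDiag (β : Type*) {α' : Type*} : Perm α' →* Perm (β × α') where
  toFun T := Equiv.prodCongr (Equiv.refl β) T
  map_one' := by ext ⟨i, v⟩ <;> rfl
  map_mul' f g := by ext ⟨i, v⟩ <;> rfl

lemma blockDiag_apply {α' : Type*} (T : Perm α') (x : β × α') :
    blockDiag β T x = (x.1, T x.2) := rfl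

lemma sc_blockDiag {α' : Type*} (T : Perm α') (x y : β × α') :
    (blockDiag β T).SameCycle x y ↔ x.1 = y.1 ∧ T.SameCycle x.2 y.2 := by
  constructor
  · rintro ⟨z, hz⟩
    rw [← map_zpow] at hz
    obtain ⟨i, v⟩ := x
    obtain ⟨j, w⟩ := y
    rw [blockDiag_apply] at hz
    refine ⟨(congrArg Prod.fst hz : _), ⟨z, (congrArg Prod.snd hz : _)⟩⟩
  · rintro ⟨h1, z, hz⟩
    refine ⟨z, ?_⟩
    rw [← map_zpow, blockDiag_apply]
    obtain ⟨i, v⟩ := x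
    obtain ⟨j, w⟩ := y
    simp only at h1 hz ⊢
    rw [h1, hz]

lemma cyc_blockDiag [Finite β] {α' : Type*} [Finite α'] (T : Perm α') :
    cyc (blockDiag β T) = Nat.card β * cyc T := by
  unfold cyc
  rw [← Nat.card_prod]
  refine Nat.card_congr ?_
  let sB := Equiv.Perm.SameCycle.setoid (blockDiag β T)
  let sT := Equiv.Perm.SameCycle.setoid T
  have wdF : ∀ x y : β × α', sB.r x y →
      ((x.1, Quotient.mk sT x.2) : β × Quotient sT) = (y.1, Quotient.mk sT y.2) := by
    intro x y hxy
    obtain ⟨h1, h2⟩ := (sc_blockDiag T x y).1 hxy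
    exact Prod.ext h1 (Quotient.sound h2)
  have wdG : ∀ i : β, ∀ v w : α', sT.r v w →
      (Quotient.mk sB (i, v)) = Quotient.mk sB (i, w) := by
    intro i v w hvw
    exact Quotient.sound ((sc_blockDiag T (i, v) (i, w)).2 ⟨rfl, hvw⟩)
  refine ⟨Quotient.lift (fun x : β × α' => ((x.1, Quotient.mk sT x.2) : β × Quotient sT)) wdF,
    fun p => Quotient.lift (fun v : α' => Quotient.mk sB (p.1, v)) (wdG p.1) p.2, ?_, ?_⟩
  · refine Quotient.ind fun x => ?_
    rfl
  · rintro ⟨i, q⟩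
    obtain ⟨v, rfl⟩ := Quotient.exists_rep q
    rfl

end BlockDiag

section Chain

open Fin.NatCast

variable {α' : Type*} [Finite α'] [DecidableEq α']

variable (m : ℕ) (x₀ : α')

/-- The cut points: one marked vertex in each copy. -/
def chainP (k : ℕ) : Fin (m + 1) × α' := ((k : Fin (m + 1)), x₀)

/-- The chain-gluing permutation: product of transpositions of consecutive cut points. -/
def chainW : ℕ → Perm (Fin (m + 1) × α')
  | 0 => 1
  | k + 1 => Equiv.swap (chainP m x₀ k) (chainP m x₀ (k + 1)) * chainW k

lemma chainW_snd : ∀ (k : ℕ) (x : Fin (m + 1) × α'), (chainW m x₀ k x).2 = x.2 := by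
  intro k
  induction k with
  | zero => intro x; rfl
  | succ k ih =>
    intro x
    show (Equiv.swap (chainP m x₀ k) (chainP m x₀ (k + 1)) (chainW m x₀ k x)).2 = x.2
    rw [Equiv.swap_apply_def]
    split_ifs with h1 h2
    · rw [← ih x, h1]; rfl
    · rw [← ih x, h2]; rfl
    · exact ih x

lemma chainWG_high {k : ℕ} (hk : k ≤ m) (T : Perm α') :
    ∀ (i : Fin (m + 1)) (v : α'), k < i.val →
      (chainW m x₀ k * blockDiag (Fin (m + 1)) T) (i, v) = (i, T v) := by
  induction k with
  | zero =>
    intro i v _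
    show chainW m x₀ 0 (blockDiag (Fin (m + 1)) T (i, v)) = (i, T v)
    rfl
  | succ k ih =>
    intro i v hi
    have hk' : k ≤ m := Nat.le_of_succ_le hk
    have h1 : (chainW m x₀ k * blockDiag (Fin (m + 1)) T) (i, v) = (i, T v) :=
      ih hk' i v (Nat.lt_of_succ_lt hi)
    show Equiv.swap (chainP m x₀ k) (chainP m x₀ (k + 1))
        ((chainW m x₀ k * blockDiag (Fin (m + 1)) T) (i, v)) = (i, T v)
    rw [h1]
    have e1 : ((i, T v) : Fin (m + 1) × α') ≠ chainP m x₀ k := by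
      intro h
      have : i.val = ((k : ℕ) : Fin (m + 1)).val := congrArg Fin.val (congrArg Prod.fst h)
      rw [Fin.val_cast_of_lt (Nat.lt_succ_of_le hk')] at this
      omega
    have e2 : ((i, T v) : Fin (m + 1) × α') ≠ chainP m x₀ (k + 1) := by
      intro h
      have : i.val = (((k + 1 : ℕ)) : Fin (m + 1)).val := congrArg Fin.val (congrArg Prod.fst h)
      rw [Fin.val_cast_of_lt (Nat.lt_succ_of_le hk)] at this
      omega
    exact Equiv.swap_apply_of_ne_of_ne e1 e2

lemma chainWG_high_pow {k : ℕ} (hk : k ≤ m) (T : Perm α') (i : Fin (m + 1)) (hi : k < i.val) :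
    ∀ (r : ℕ) (v : α'),
      ((chainW m x₀ k * blockDiag (Fin (m + 1)) T) ^ r) (i, v) = (i, (T ^ r) v) := by
  intro r
  induction r with
  | zero => intro v; rfl
  | succ r ih =>
    intro v
    rw [pow_succ, Perm.mul_apply, chainWG_high m x₀ hk T i v hi, ih (T v)]
    rw [pow_succ, Perm.mul_apply]

lemma chainWG_not_sc {k : ℕ} (hk : k + 1 ≤ m) (T : Perm α') :
    ¬ (chainW m x₀ k * blockDiag (Fin (m + 1)) T).SameCycle
      (chainP m x₀ (k + 1)) (chainP m x₀ k) := by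
  intro h
  obtain ⟨r, hr⟩ := (sameCycle_iff_exists_pow _ _ _).1 h
  rw [chainP, chainP] at hr
  rw [chainWG_high_pow m x₀ (Nat.le_of_succ_le hk) T _ ?_ r x₀] at hr
  · have : (((k + 1 : ℕ)) : Fin (m + 1)).val = ((k : ℕ) : Fin (m + 1)).val :=
      congrArg Fin.val (congrArg Prod.fst hr)
    rw [Fin.val_cast_of_lt (Nat.lt_succ_of_le hk),
      Fin.val_cast_of_lt (Nat.lt_succ_of_le (Nat.le_of_succ_le hk))] at this
    omega
  · rw [Fin.val_cast_of_lt (Nat.lt_succ_of_le hk)]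
    omega

lemma chain_main (T : Perm α') :
    ∀ k : ℕ, k ≤ m →
      cyc (chainW m x₀ k * blockDiag (Fin (m + 1)) T) + k
          = cyc (blockDiag (Fin (m + 1)) T) ∧
      (∀ j j' : ℕ, j ≤ k → j' ≤ k →
        (chainW m x₀ k * blockDiag (Fin (m + 1)) T).SameCycle
          (chainP m x₀ j) (chainP m x₀ j')) := by
  intro k
  induction k with
  | zero =>
    intro _
    constructor
    · show cyc (1 * blockDiag (Fin (m + 1)) T) + 0 = _
      rw [one_mul]
      omega
    · intro j j' hj hj'
      interval_cases j
      interval_cases j'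
      exact Equiv.Perm.SameCycle.rfl
  | succ k ih =>
    intro hk
    obtain ⟨ihc, ihs⟩ := ih (Nat.le_of_succ_le hk)
    have hnot : ¬ (chainW m x₀ k * blockDiag (Fin (m + 1)) T).SameCycle
        (chainP m x₀ k) (chainP m x₀ (k + 1)) := by
      intro h
      exact chainWG_not_sc m x₀ hk T h.symm
    have hWG : chainW m x₀ (k + 1) * blockDiag (Fin (m + 1)) T
        = Equiv.swap (chainP m x₀ k) (chainP m x₀ (k + 1))
          * (chainW m x₀ k * blockDiag (Fin (m + 1)) T) := by
      rw [chainW, mul_assoc]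
    constructor
    · rw [hWG]
      have := cyc_swap_mul hnot
      omega
    · intro j j' hj hj'
      have hnew : (chainW m x₀ (k + 1) * blockDiag (Fin (m + 1)) T).SameCycle
          (chainP m x₀ k) (chainP m x₀ (k + 1)) := by
        rw [hWG]; exact sc_swap_mul_self hnot
      have lift : ∀ j j' : ℕ, j ≤ k → j' ≤ k →
          (chainW m x₀ (k + 1) * blockDiag (Fin (m + 1)) T).SameCycle
            (chainP m x₀ j) (chainP m x₀ j') := by
        intro j j' hj hj'
        rw [hWG]
        exact sc_swap_mul_mono hnot (ihs j j' hj hj')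
      rcases Nat.lt_succ_iff_lt_or_eq.1 (Nat.lt_succ_of_le hj) with h | rfl
      · rcases Nat.lt_succ_iff_lt_or_eq.1 (Nat.lt_succ_of_le hj') with h' | rfl
        · exact lift j j' (Nat.lt_succ_iff.1 h) (Nat.lt_succ_iff.1 h')
        · exact (lift j k (Nat.lt_succ_iff.1 h) le_rfl).trans hnew
      · rcases Nat.lt_succ_iff_lt_or_eq.1 (Nat.lt_succ_of_le hj') with h' | rfl
        · exact hnew.symm.trans (lift k j' le_rfl (Nat.lt_succ_iff.1 h'))
        · exact Equiv.Perm.SameCycle.rfl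

end Chain

section ExtAux

lemma extPerm_one {n : ℕ} : extPerm (1 : Perm (Fin n)) = 1 := by
  ext x
  induction x using Fin.cases with
  | zero => simp [extPerm_apply_zero]
  | succ i => simp [extPerm_apply_succ]

lemma extPerm_inv {n : ℕ} (f : Perm (Fin n)) : (extPerm f)⁻¹ = extPerm f⁻¹ := by
  rw [eq_comm, eq_inv_iff_mul_eq_one, ← extPerm_mul, inv_mul_cancel, extPerm_one]

lemma cyc_subsingleton {α : Type*} [Finite α] [Subsingleton α] [Nonempty α] (f : Perm α) :
    cyc f = 1 := by
  unfold cyc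
  rw [Nat.card_eq_one_iff_unique]
  constructor
  · constructor
    intro q q'
    obtain ⟨x, rfl⟩ := Quotient.exists_rep q
    obtain ⟨y, rfl⟩ := Quotient.exists_rep q'
    rw [Subsingleton.elim x y]
  · exact ⟨Quotient.mk _ (Classical.arbitrary α)⟩

end ExtAux

section BuildsInvariant

open Relation

theorem builds_invariant {d n : ℕ} {B : Bubble d n} {s : Multiset (Finset (Fin d))}
    (h : Builds d n B s) :
    ∃ ρ : Perm (Fin n),
      ((∑ c : Fin d, cyc ((B c)⁻¹ * ρ)) + (s.map Finset.card).sum = d * n) ∧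
      (∀ v w : Fin n, Relation.EqvGen (fun v w => ∃ c, ((B c)⁻¹ * ρ) v = w) v w) := by
  induction h with
  | base =>
    refine ⟨1, ?_, ?_⟩
    · simp [cyc_subsingleton]
    · intro v w
      rw [Subsingleton.elim v w]
      exact EqvGen.refl w
  | @stepW n B s C v₀ hC hB IH =>
    obtain ⟨ρ₀, hcount, hconn⟩ := IH
    set σ : Fin d → Perm (Fin n) := fun c => (B c)⁻¹ * ρ₀ with hσ
    set ρ : Perm (Fin (n + 1)) := extPerm ρ₀ * Equiv.swap 0 v₀.succ with hρ
    have hin : ∀ c ∈ C, (insertWhite B C v₀ c)⁻¹ * ρ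
        = extPerm (σ c) * Equiv.swap 0 v₀.succ := by
      intro c hc
      rw [hρ, insertWhite, if_pos hc, extPerm_inv, ← mul_assoc, ← extPerm_mul, hσ]
    have hout : ∀ c ∉ C, (insertWhite B C v₀ c)⁻¹ * ρ
        = Equiv.swap 0 v₀.succ * extPerm (σ c) * Equiv.swap 0 v₀.succ := by
      intro c hc
      rw [hρ, insertWhite, if_neg hc, mul_inv_rev, Equiv.swap_inv, extPerm_inv,
        mul_assoc, ← mul_assoc (extPerm (B c)⁻¹), ← extPerm_mul, hσ, mul_assoc]
    have hnsc : ∀ g : Perm (Fin n), ¬ (extPerm g).SameCycle 0 v₀.succ := by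
      intro g hcon
      exact Fin.succ_ne_zero v₀ ((sc_ext_zero g _).1 hcon)
    have hcyc_in : ∀ c ∈ C, cyc ((insertWhite B C v₀ c)⁻¹ * ρ) = cyc (σ c) := by
      intro c hc
      rw [hin c hc, ← cyc_inv, mul_inv_rev, Equiv.swap_inv, extPerm_inv]
      have := cyc_swap_mul (hnsc (σ c)⁻¹)
      rw [cyc_extPerm, cyc_inv] at this
      omega
    have hcyc_out : ∀ c ∉ C, cyc ((insertWhite B C v₀ c)⁻¹ * ρ) = cyc (σ c) + 1 := by
      intro c hc
      rw [hout c hc]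
      have hsw : Equiv.swap (0 : Fin (n+1)) v₀.succ
          = (Equiv.swap (0 : Fin (n+1)) v₀.succ)⁻¹ := (Equiv.swap_inv _ _).symm
      nth_rewrite 2 [hsw]
      rw [cyc_conj, cyc_extPerm]
    refine ⟨ρ, ?_, ?_⟩
    · rw [Multiset.map_cons, Multiset.sum_cons]
      have hsplit : ∑ c : Fin d, cyc ((insertWhite B C v₀ c)⁻¹ * ρ)
          = ∑ c : Fin d, (cyc (σ c) + if c ∈ C then 0 else 1) := by
        refine Finset.sum_congr rfl fun c _ => ?_
        by_cases hc : c ∈ C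
        · rw [hcyc_in c hc, if_pos hc, Nat.add_zero]
        · rw [hcyc_out c hc, if_neg hc]
      rw [hsplit, Finset.sum_add_distrib]
      have h1 : (∑ c : Fin d, if c ∈ C then 0 else 1) + C.card = d := by
        have e1 : (∑ c : Fin d, if c ∈ C then (1:ℕ) else 0) = C.card := by
          simp [Finset.sum_ite_mem]
        have e2 : (∑ c : Fin d, if c ∈ C then (0:ℕ) else 1)
            + (∑ c : Fin d, if c ∈ C then (1:ℕ) else 0) = d := by
          rw [← Finset.sum_add_distrib]
          have : ∀ c : Fin d, ((if c ∈ C then (0:ℕ) else 1) + if c ∈ C then (1:ℕ) else 0) = 1 := by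
            intro c; by_cases hc : c ∈ C <;> simp [hc]
          simp [this]
        omega
      have hmul : d * (n + 1) = d * n + d := by ring
      have hcount' : (∑ c : Fin d, cyc (σ c)) + (Multiset.map Finset.card s).sum = d * n :=
        hcount
      omega
    · obtain ⟨c₁, hc₁⟩ := hC.1
      set r' : Fin (n+1) → Fin (n+1) → Prop :=
        fun v w => ∃ c, ((insertWhite B C v₀ c)⁻¹ * ρ) v = w with hr'
      have step0 : EqvGen r' v₀.succ 0 := by
        refine EqvGen.rel _ _ ⟨c₁, ?_⟩
        rw [hin c₁ hc₁, Perm.mul_apply, Equiv.swap_apply_right, extPerm_apply_zero]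
      have hlift : ∀ v w : Fin n, EqvGen (fun v w => ∃ c, ((B c)⁻¹ * ρ₀) v = w) v w →
          EqvGen r' v.succ w.succ := by
        intro v w hvw
        induction hvw with
        | rel x y hxy =>
          obtain ⟨c, hcxy⟩ := hxy
          have hcxy' : σ c x = y := hcxy
          by_cases hc : c ∈ C
          · by_cases hxv : x = v₀
            · subst hxv
              refine EqvGen.trans _ _ _ step0 (EqvGen.rel _ _ ⟨c, ?_⟩)
              rw [hin c hc, Perm.mul_apply, Equiv.swap_apply_left, extPerm_apply_succ, hcxy']
            · refine EqvGen.rel _ _ ⟨c, ?_⟩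
              rw [hin c hc, Perm.mul_apply,
                Equiv.swap_apply_of_ne_of_ne (Fin.succ_ne_zero x)
                  (fun hcon => hxv (Fin.succ_injective n hcon)),
                extPerm_apply_succ, hcxy']
          · by_cases hxv : x = v₀
            · subst hxv
              by_cases hyv : σ c x = x
              · have hy : y = x := by rw [← hcxy', hyv]
                rw [hy]
                exact EqvGen.refl _
              · refine EqvGen.trans _ _ _ step0 (EqvGen.rel _ _ ⟨c, ?_⟩)
                rw [hout c hc, Perm.mul_apply, Perm.mul_apply, Equiv.swap_apply_left,
                  extPerm_apply_succ,
                  Equiv.swap_apply_of_ne_of_ne (Fin.succ_ne_zero _)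
                    (fun hcon => hyv (Fin.succ_injective n hcon)), hcxy']
            · by_cases hyv : σ c x = v₀
              · have hy : y = v₀ := by rw [← hcxy', hyv]
                refine EqvGen.trans _ _ _ (EqvGen.rel _ _ ⟨c, ?_⟩)
                  (hy ▸ EqvGen.symm _ _ step0)
                rw [hout c hc, Perm.mul_apply, Perm.mul_apply,
                  Equiv.swap_apply_of_ne_of_ne (Fin.succ_ne_zero x)
                    (fun hcon => hxv (Fin.succ_injective n hcon)),
                  extPerm_apply_succ, hyv, Equiv.swap_apply_right]
              · refine EqvGen.rel _ _ ⟨c, ?_⟩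
                rw [hout c hc, Perm.mul_apply, Perm.mul_apply,
                  Equiv.swap_apply_of_ne_of_ne (Fin.succ_ne_zero x)
                    (fun hcon => hxv (Fin.succ_injective n hcon)),
                  extPerm_apply_succ,
                  Equiv.swap_apply_of_ne_of_ne (Fin.succ_ne_zero _)
                    (fun hcon => hyv (Fin.succ_injective n hcon)), hcxy']
        | refl x => exact EqvGen.refl _
        | symm x y _ ih => exact EqvGen.symm _ _ ih
        | trans x y z _ _ ih1 ih2 => exact EqvGen.trans _ _ _ ih1 ih2
      intro v w
      induction v using Fin.cases with
      | zero =>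
        induction w using Fin.cases with
        | zero => exact EqvGen.refl _
        | succ j =>
          exact EqvGen.trans _ _ _ (EqvGen.symm _ _ step0) (hlift v₀ j (hconn v₀ j))
      | succ i =>
        induction w using Fin.cases with
        | zero =>
          exact EqvGen.trans _ _ _ (hlift i v₀ (hconn i v₀)) step0
        | succ j => exact hlift i j (hconn i j)
  | @stepB n B s C b₀ hC hB IH =>
    obtain ⟨ρ₀, hcount, hconn⟩ := IH
    set σ : Fin d → Perm (Fin n) := fun c => (B c)⁻¹ * ρ₀ with hσ
    set ρ : Perm (Fin (n + 1)) := Equiv.swap 0 b₀.succ * extPerm ρ₀ with hρ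
    have hin : ∀ c ∈ C, (insertBlack B C b₀ c)⁻¹ * ρ
        = Equiv.swap 0 ((B c)⁻¹ b₀).succ * extPerm (σ c) := by
      intro c hc
      have key : extPerm (B c)⁻¹ * Equiv.swap 0 b₀.succ
          = Equiv.swap 0 ((B c)⁻¹ b₀).succ * extPerm (B c)⁻¹ := by
        have h2 := Equiv.swap_apply_apply (extPerm (B c)⁻¹) 0 b₀.succ
        rw [extPerm_apply_zero, extPerm_apply_succ] at h2
        rw [h2, mul_assoc, mul_assoc, inv_mul_cancel, mul_one]
      rw [hρ, insertBlack, if_pos hc, extPerm_inv, ← mul_assoc, key, mul_assoc,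
        ← extPerm_mul, hσ]
    have hout : ∀ c ∉ C, (insertBlack B C b₀ c)⁻¹ * ρ = extPerm (σ c) := by
      intro c hc
      rw [hρ, insertBlack, if_neg hc, mul_inv_rev, Equiv.swap_inv, extPerm_inv,
        mul_assoc, ← mul_assoc (Equiv.swap 0 b₀.succ), Equiv.swap_mul_self, one_mul,
        ← extPerm_mul, hσ]
    have hnsc : ∀ (g : Perm (Fin n)) (t : Fin n), ¬ (extPerm g).SameCycle 0 t.succ := by
      intro g t hcon
      exact Fin.succ_ne_zero t ((sc_ext_zero g _).1 hcon)
    have hcyc_in : ∀ c ∈ C, cyc ((insertBlack B C b₀ c)⁻¹ * ρ) = cyc (σ c) := by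
      intro c hc
      rw [hin c hc]
      have := cyc_swap_mul (hnsc (σ c) ((B c)⁻¹ b₀))
      rw [cyc_extPerm] at this
      omega
    have hcyc_out : ∀ c ∉ C, cyc ((insertBlack B C b₀ c)⁻¹ * ρ) = cyc (σ c) + 1 := by
      intro c hc
      rw [hout c hc, cyc_extPerm]
    refine ⟨ρ, ?_, ?_⟩
    · rw [Multiset.map_cons, Multiset.sum_cons]
      have hsplit : ∑ c : Fin d, cyc ((insertBlack B C b₀ c)⁻¹ * ρ)
          = ∑ c : Fin d, (cyc (σ c) + if c ∈ C then 0 else 1) := by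
        refine Finset.sum_congr rfl fun c _ => ?_
        by_cases hc : c ∈ C
        · rw [hcyc_in c hc, if_pos hc, Nat.add_zero]
        · rw [hcyc_out c hc, if_neg hc]
      rw [hsplit, Finset.sum_add_distrib]
      have h1 : (∑ c : Fin d, if c ∈ C then 0 else 1) + C.card = d := by
        have e1 : (∑ c : Fin d, if c ∈ C then (1:ℕ) else 0) = C.card := by
          simp [Finset.sum_ite_mem]
        have e2 : (∑ c : Fin d, if c ∈ C then (0:ℕ) else 1)
            + (∑ c : Fin d, if c ∈ C then (1:ℕ) else 0) = d := by
          rw [← Finset.sum_add_distrib]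
          have : ∀ c : Fin d, ((if c ∈ C then (0:ℕ) else 1) + if c ∈ C then (1:ℕ) else 0) = 1 := by
            intro c; by_cases hc : c ∈ C <;> simp [hc]
          simp [this]
        omega
      have hmul : d * (n + 1) = d * n + d := by ring
      have hcount' : (∑ c : Fin d, cyc (σ c)) + (Multiset.map Finset.card s).sum = d * n :=
        hcount
      omega
    · obtain ⟨c₁, hc₁⟩ := hC.1
      set r' : Fin (n+1) → Fin (n+1) → Prop :=
        fun v w => ∃ c, ((insertBlack B C b₀ c)⁻¹ * ρ) v = w with hr'
      have hzero : ∀ c ∈ C, ((insertBlack B C b₀ c)⁻¹ * ρ) 0 = ((B c)⁻¹ b₀).succ := by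
        intro c hc
        rw [hin c hc, Perm.mul_apply, extPerm_apply_zero, Equiv.swap_apply_left]
      have step0 : EqvGen r' 0 ((B c₁)⁻¹ b₀).succ := EqvGen.rel _ _ ⟨c₁, hzero c₁ hc₁⟩
      have hlift : ∀ v w : Fin n, EqvGen (fun v w => ∃ c, ((B c)⁻¹ * ρ₀) v = w) v w →
          EqvGen r' v.succ w.succ := by
        intro v w hvw
        induction hvw with
        | rel x y hxy =>
          obtain ⟨c, hcxy⟩ := hxy
          have hcxy' : σ c x = y := hcxy
          by_cases hc : c ∈ C
          · by_cases hyu : σ c x = (B c)⁻¹ b₀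
            · refine EqvGen.trans _ (0 : Fin (n+1)) _ (EqvGen.rel _ _ ⟨c, ?_⟩)
                (EqvGen.rel _ _ ⟨c, ?_⟩)
              · rw [hin c hc, Perm.mul_apply, extPerm_apply_succ, hyu,
                  Equiv.swap_apply_right]
              · rw [hzero c hc, ← hyu, hcxy']
            · refine EqvGen.rel _ _ ⟨c, ?_⟩
              rw [hin c hc, Perm.mul_apply, extPerm_apply_succ,
                Equiv.swap_apply_of_ne_of_ne (Fin.succ_ne_zero _)
                  (fun hcon => hyu (Fin.succ_injective n hcon)), hcxy']
          · refine EqvGen.rel _ _ ⟨c, ?_⟩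
            rw [hout c hc, extPerm_apply_succ, hcxy']
        | refl x => exact EqvGen.refl _
        | symm x y _ ih => exact EqvGen.symm _ _ ih
        | trans x y z _ _ ih1 ih2 => exact EqvGen.trans _ _ _ ih1 ih2
      intro v w
      induction v using Fin.cases with
      | zero =>
        induction w using Fin.cases with
        | zero => exact EqvGen.refl _
        | succ j =>
          exact EqvGen.trans _ _ _ step0 (hlift ((B c₁)⁻¹ b₀) j (hconn _ j))
      | succ i =>
        induction w using Fin.cases with
        | zero =>
          exact EqvGen.trans _ _ _ (hlift i ((B c₁)⁻¹ b₀) (hconn i _))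
            (EqvGen.symm _ _ step0)
        | succ j => exact hlift i j (hconn i j)

end BuildsInvariant


section Final

open Relation

lemma builds_pos {d n : ℕ} {B : Bubble d n} {s : Multiset (Finset (Fin d))}
    (h : Builds d n B s) : 0 < n := by
  induction h with
  | base => omega
  | stepW _ _ _ _ _ => omega
  | stepB _ _ _ _ _ => omega

/-- Lemma `thm:Trees`: for every `b ≥ 1` there is a connected Feynman
graph with `b` copies of the GM bubble `B` whose total number of bicolored `{0,c}`-cycles
is `(d(V−2)/2 − Σ_C |C| b_C)·b + d`, where `V = 2n` (so `d(V−2)/2 = d(n−1)`). -/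
theorem chain_gluing_cycles {d n : ℕ} (hd : 2 < d) {B : Bubble d n}
    {s : Multiset (Finset (Fin d))} (h : Builds d n B s) :
    ∀ b : ℕ, 1 ≤ b → ∃ π₀ : Equiv.Perm (Fin b × Fin n),
      FeynmanConnected B π₀ ∧
      (feynmanCycles B π₀ : ℤ) =
        ((d : ℤ) * ((n : ℤ) - 1) - (s.map fun C => (C.card : ℤ)).sum) * b + d := by
  intro b hb
  obtain ⟨m, rfl⟩ : ∃ m, b = m + 1 := ⟨b - 1, by omega⟩
  have hn : 0 < n := builds_pos h
  obtain ⟨ρ, hcount, hconn⟩ := builds_invariant h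
  set x₀ : Fin n := ⟨0, hn⟩ with hx₀
  set π₀ : Perm (Fin (m + 1) × Fin n) :=
    chainW m x₀ m * blockDiag (Fin (m + 1)) ρ⁻¹ with hπ₀
  set P : Fin d → Perm (Fin (m + 1) × Fin n) :=
    fun c => chainW m x₀ m * blockDiag (Fin (m + 1)) (ρ⁻¹ * B c) with hP
  have happ : ∀ (c : Fin d) (a : Fin (m + 1) × Fin n), π₀ (a.1, B c a.2) = P c a :=
    fun c a => rfl
  set R : (Fin (m+1) × Fin n) → (Fin (m+1) × Fin n) → Prop :=
    fun a a' => ∃ c : Fin d, π₀ (a.1, B c a.2) = a' with hR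
  -- counting
  have hcyc : ∀ c : Fin d, cyc (P c) + m = (m + 1) * cyc ((B c)⁻¹ * ρ) := by
    intro c
    have h1 := (chain_main m x₀ (ρ⁻¹ * B c) m le_rfl).1
    rw [cyc_blockDiag] at h1
    have h2 : cyc (ρ⁻¹ * B c) = cyc ((B c)⁻¹ * ρ) := by
      rw [← cyc_inv (ρ⁻¹ * B c), mul_inv_rev, inv_inv]
    rw [h2] at h1
    rw [Nat.card_eq_fintype_card, Fintype.card_fin] at h1
    exact h1
  have hfeyn : feynmanCycles B π₀ = ∑ c : Fin d, cyc (P c) := by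
    unfold feynmanCycles
    refine Finset.sum_congr rfl fun c _ => ?_
    have : (fun w : Fin (m+1) × Fin n => π₀ (w.1, B c w.2)) = ⇑(P c) := by
      funext w; exact happ c w
    rw [this, numOrbits_perm]
  have hsum : (∑ c : Fin d, cyc (P c)) + d * m
      = (m + 1) * ∑ c : Fin d, cyc ((B c)⁻¹ * ρ) := by
    have := Finset.sum_congr rfl fun c (_ : c ∈ Finset.univ) => hcyc c
    rw [Finset.sum_add_distrib, Finset.mul_sum] at *
    simpa [Finset.sum_const, Finset.card_univ, mul_comm] using this
  -- connectivity
  refine ⟨π₀, ?_, ?_⟩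
  · intro a a'
    have hstep : ∀ (c : Fin d) (x : Fin (m+1) × Fin n), EqvGen R x (P c x) :=
      fun c x => EqvGen.rel _ _ ⟨c, happ c x⟩
    have hpow : ∀ (c : Fin d) (k : ℕ) (x : Fin (m+1) × Fin n),
        EqvGen R x (((P c) ^ k) x) := by
      intro c k
      induction k with
      | zero => intro x; exact EqvGen.refl _
      | succ k ih =>
        intro x
        rw [pow_succ, Perm.mul_apply]
        exact EqvGen.trans _ _ _ (hstep c x) (ih (P c x))
    have hsc : ∀ (c : Fin d) (x y : Fin (m+1) × Fin n),
        (P c).SameCycle x y → EqvGen R x y := by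
      intro c x y hxy
      obtain ⟨k, rfl⟩ := (sameCycle_iff_exists_pow _ _ _).1 hxy
      exact hpow c k x
    have c₀ : Fin d := ⟨0, by omega⟩
    have hub : ∀ i j : Fin (m + 1), EqvGen R (i, x₀) (j, x₀) := by
      intro i j
      have h1 := (chain_main m x₀ (ρ⁻¹ * B c₀) m le_rfl).2 i.val j.val
        (by omega) (by omega)
      rw [chainP, chainP, Fin.cast_val_eq_self, Fin.cast_val_eq_self] at h1
      exact hsc c₀ _ _ h1
    have hsndP : ∀ (c : Fin d) (z : Fin (m+1) × Fin n), (P c z).2 = (ρ⁻¹ * B c) z.2 := by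
      intro c z
      show ((chainW m x₀ m) (blockDiag (Fin (m+1)) (ρ⁻¹ * B c) z)).2 = _
      rw [chainW_snd, blockDiag_apply]
    have reach : ∀ v w : Fin n,
        (∀ i : Fin (m+1), ∃ j, EqvGen R (i, v) (j, w)) := by
      intro v w
      have key : ∀ v w : Fin n,
          EqvGen (fun v w => ∃ c, ((B c)⁻¹ * ρ) v = w) v w →
          ((∀ i : Fin (m+1), ∃ j, EqvGen R (i, v) (j, w)) ∧
           (∀ i : Fin (m+1), ∃ j, EqvGen R (i, w) (j, v))) := by
        intro v w hvw
        induction hvw with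
        | rel x y hxy =>
          obtain ⟨c, hc⟩ := hxy
          have hTy : (ρ⁻¹ * B c) y = x := by
            rw [← hc]
            simp [Perm.mul_apply]
          constructor
          · intro i
            set z := (P c)⁻¹ (i, x) with hzdef
            have h1 : (P c) z = (i, x) := (P c).apply_symm_apply (i, x)
            have hz2 : z.2 = y := by
              have h2 : (ρ⁻¹ * B c) z.2 = x := by rw [← hsndP c z, h1]
              exact (Equiv.injective (ρ⁻¹ * B c)) (h2.trans hTy.symm)
            refine ⟨z.1, ?_⟩
            have hz : z = (z.1, y) := Prod.ext rfl hz2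
            have hstepz : EqvGen R z (i, x) :=
              EqvGen.rel _ _ ⟨c, (happ c z).trans h1⟩
            exact hz ▸ EqvGen.symm _ _ hstepz
          · intro i
            refine ⟨(P c (i, y)).1, ?_⟩
            have hz : P c (i, y) = ((P c (i, y)).1, x) := by
              refine Prod.ext rfl ?_
              rw [hsndP c (i, y), hTy]
            exact hz ▸ EqvGen.rel _ _ ⟨c, happ c (i, y)⟩
        | refl x => exact ⟨fun i => ⟨i, EqvGen.refl _⟩, fun i => ⟨i, EqvGen.refl _⟩⟩
        | symm x y _ ih => exact ⟨ih.2, ih.1⟩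
        | trans x y z _ _ ih1 ih2 =>
          constructor
          · intro i
            obtain ⟨j, h1⟩ := ih1.1 i
            obtain ⟨k, h2⟩ := ih2.1 j
            exact ⟨k, EqvGen.trans _ _ _ h1 h2⟩
          · intro i
            obtain ⟨j, h1⟩ := ih2.2 i
            obtain ⟨k, h2⟩ := ih1.2 j
            exact ⟨k, EqvGen.trans _ _ _ h1 h2⟩
      exact (key v w (hconn v w)).1
    obtain ⟨j, hj⟩ := reach a.2 x₀ a.1
    obtain ⟨j', hj'⟩ := reach a'.2 x₀ a'.1
    have ha : EqvGen R a (j, x₀) := by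
      have : a = (a.1, a.2) := rfl
      rw [this]; exact hj
    have ha' : EqvGen R a' (j', x₀) := by
      have : a' = (a'.1, a'.2) := rfl
      rw [this]; exact hj'
    exact EqvGen.trans _ _ _ (EqvGen.trans _ _ _ ha (hub j j'))
      (EqvGen.symm _ _ ha')
  · -- arithmetic
    have hZ : ((s.map fun C => (C.card : ℤ)).sum)
        = (((s.map Finset.card).sum : ℕ) : ℤ) := by
      induction s using Multiset.induction_on with
      | empty => simp
      | cons a t ih => simp [ih]
    rw [hfeyn]
    have hFZ : ((∑ c : Fin d, cyc (P c) : ℕ) : ℤ) + (d : ℤ) * m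
        = ((m : ℤ) + 1) * ((∑ c : Fin d, cyc ((B c)⁻¹ * ρ) : ℕ) : ℤ) := by
      exact_mod_cast congrArg (fun k : ℕ => (k : ℤ)) hsum
    have hYZ : ((∑ c : Fin d, cyc ((B c)⁻¹ * ρ) : ℕ) : ℤ)
        + (((s.map Finset.card).sum : ℕ) : ℤ) = (d : ℤ) * n := by
      exact_mod_cast congrArg (fun k : ℕ => (k : ℤ)) hcount
    rw [hZ]
    push_cast at hFZ hYZ ⊢
    linear_combination hFZ + ((m : ℤ) + 1) * hYZ

end Final
end
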